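/- arXiv:2109.07440 — 8 statements merged into one kernel-verified Lean document; each statement's English description precedes it below -/
import Mathlib

section
/- Let (G_n) be a lazy random walk on ℤ started at −M (M > 0 integer) with steps +1 with probability p_a = e^{α−1} − e^{−1}, −1 with probability p_h = e^{−α} − e^{−1}, and 0 otherwise, for 0 < α < 1/2. Then the probability that G_n ever reaches 0 equals ((e^α − 1)/(e^{1−α} − 1))^M. -/
/-!
Put `r = p_a / p_h < 1`. Since `p_a r⁻¹ + p_h r + (1 - p_a - p_h) = 1`, the process `r ^ (-G n)`
stopped at the first visit to `0` has constant expectation `r ^ M`: each of its increments is a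
function of the first `n` steps times `r ^ (-step n) - 1`, which is independent of them and centred.
The walk cannot jump over `0` from below, so the stopped process stays in `[0, 1]`; by the strong
law of large numbers `G n → -∞` almost surely, because the drift `p_a - p_h` is negative. Hence the
stopped process converges to the indicator of ever reaching `0`, and bounded convergence gives
`ℙ(G hits 0) = r ^ M`. Multiplying numerator and denominator by `e` turns `p_a / p_h` into
`(e^α - 1) / (e^(1-α) - 1)`.
-/

open MeasureTheory ProbabilityTheory Filter Finset Topology

noncomputable def threePoint (p q : ℝ) : Measure ℤ :=
  ENNReal.ofReal p • Measure.dirac 1 + ENNReal.ofReal q • Measure.dirac (-1) +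
    ENNReal.ofReal (1 - p - q) • Measure.dirac 0

lemma integral_threePoint {p q : ℝ} (hp : 0 ≤ p) (hq : 0 ≤ q) (hpq : 0 ≤ 1 - p - q)
    (f : ℤ → ℝ) :
    ∫ z, f z ∂threePoint p q = p * f 1 + q * f (-1) + (1 - p - q) * f 0 := by
  have hf (c : ℝ) (a : ℤ) : Integrable f (ENNReal.ofReal c • Measure.dirac a) :=
    (integrable_dirac enorm_lt_top).smul_measure ENNReal.ofReal_ne_top
  rw [threePoint, integral_add_measure ((hf _ _).add_measure (hf _ _)) (hf _ _),
    integral_add_measure (hf _ _) (hf _ _)]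
  simp only [integral_smul_measure, integral_dirac, ENNReal.toReal_ofReal hp,
    ENNReal.toReal_ofReal hq, ENNReal.toReal_ofReal hpq, smul_eq_mul]

lemma ae_le_one_threePoint (p q : ℝ) : ∀ᵐ z ∂threePoint p q, z ≤ 1 := by
  simp only [threePoint, ae_add_measure_iff]
  refine ⟨⟨?_, ?_⟩, ?_⟩ <;> exact Measure.ae_smul_measure (by simp) _

noncomputable def stoppedExp (r : ℝ) (g : ℕ → ℤ) (n : ℕ) : ℝ :=
  if ∃ k ≤ n, g k = 0 then 1 else r ^ (-g n)

lemma stoppedExp_zero (r : ℝ) (g : ℕ → ℤ) : stoppedExp r g 0 = r ^ (-g 0) := by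
  by_cases h : g 0 = 0 <;> simp [stoppedExp, h]

lemma stoppedExp_succ_sub {r : ℝ} (hr : r ≠ 0) {g : ℕ → ℤ} {n : ℕ} {s : ℤ}
    (hs : g (n + 1) = g n + s) :
    stoppedExp r g (n + 1) - stoppedExp r g n =
      (if ∃ k ≤ n, g k = 0 then 0 else r ^ (-g n)) * (r ^ (-s) - 1) := by
  unfold stoppedExp
  by_cases hn : ∃ k ≤ n, g k = 0
  · have hn1 : ∃ k ≤ n + 1, g k = 0 := let ⟨k, hk, hk0⟩ := hn; ⟨k, hk.trans n.le_succ, hk0⟩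
    simp [hn, hn1]
  · have hpow : r ^ (-g (n + 1)) = r ^ (-g n) * r ^ (-s) := by rw [hs, neg_add, zpow_add₀ hr]
    by_cases hn1 : ∃ k ≤ n + 1, g k = 0
    · have hg0 : g (n + 1) = 0 := by
        obtain ⟨k, hk, hk0⟩ := hn1
        obtain rfl : k = n + 1 := by by_contra h; exact hn ⟨k, by omega, hk0⟩
        exact hk0
      simp only [hn, hn1, if_true, if_false]
      rw [mul_sub, mul_one, ← hpow, hg0, neg_zero, zpow_zero]
    · simp only [hn, hn1, if_false]
      rw [hpow]
      ring

lemma neg_of_step_le_one_of_forall_ne_zero {g : ℕ → ℤ} (h0 : g 0 ≤ 0)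
    (hstep : ∀ n, g (n + 1) ≤ g n + 1) {n : ℕ} (hne : ∀ k ≤ n, g k ≠ 0) : g n < 0 := by
  induction n with
  | zero => exact lt_of_le_of_ne h0 (hne 0 le_rfl)
  | succ n ih =>
    have := ih fun k hk => hne k (hk.trans n.le_succ)
    have := hne (n + 1) le_rfl
    have := hstep n
    omega

lemma stoppedExp_mem_Icc {r : ℝ} (hr0 : 0 < r) (hr1 : r ≤ 1) {g : ℕ → ℤ} (h0 : g 0 ≤ 0)
    (hstep : ∀ n, g (n + 1) ≤ g n + 1) (n : ℕ) : stoppedExp r g n ∈ Set.Icc 0 1 := by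
  unfold stoppedExp
  split_ifs with hn
  · simp
  · push Not at hn
    exact ⟨zpow_nonneg hr0.le _, zpow_le_one₀ hr0 hr1
      (neg_nonneg.2 (neg_of_step_le_one_of_forall_ne_zero h0 hstep hn).le)⟩

open Classical in
lemma tendsto_stoppedExp {r : ℝ} (hr0 : 0 ≤ r) (hr1 : r < 1) {g : ℕ → ℤ}
    (hg : Tendsto g atTop atBot) :
    Tendsto (stoppedExp r g) atTop (𝓝 (if ∃ k, g k = 0 then 1 else 0)) := by
  split_ifs with h
  · obtain ⟨k, hk⟩ := h
    exact tendsto_atTop_of_eventually_const fun n hn => if_pos ⟨k, hn, hk⟩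
  · push Not at h
    have : stoppedExp r g = fun n => r ^ ((-g n : ℤ) : ℝ) := by
      ext n
      rw [stoppedExp, if_neg fun ⟨k, _, hk⟩ => h k hk, Real.rpow_intCast]
    rw [this]
    exact (tendsto_rpow_atTop_of_base_lt_one r (by linarith) hr1).comp
      (tendsto_intCast_atTop_iff.2 (tendsto_neg_atBot_atTop.comp hg))

section Probability

variable {Ω : Type*} {mΩ : MeasurableSpace Ω} {μ : Measure Ω}

lemma map_eq_threePoint [IsProbabilityMeasure μ] {X : Ω → ℤ} (hX : Measurable X) {p q : ℝ}
    (hp : 0 ≤ p) (hq : 0 ≤ q) (hpq : 0 ≤ 1 - p - q)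
    (h1 : μ {ω | X ω = 1} = ENNReal.ofReal p) (h2 : μ {ω | X ω = -1} = ENNReal.ofReal q)
    (h0 : μ {ω | X ω = 0} = ENNReal.ofReal (1 - p - q)) :
    μ.map X = threePoint p q := by
  have : IsProbabilityMeasure (μ.map X) := Measure.isProbabilityMeasure_map hX.aemeasurable
  have hmap (a : ℤ) : μ.map X {a} = μ {ω | X ω = a} :=
    Measure.map_apply hX (measurableSet_singleton a)
  have hsupp : μ.map X ({1, -1, 0} : Finset ℤ) = 1 := by
    rw [← sum_measure_singleton, Finset.sum_insert (by decide), Finset.sum_pair (by decide),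
      hmap, hmap, hmap, h1, h2, h0, ← ENNReal.ofReal_add hq hpq,
      ← ENNReal.ofReal_add hp (by linarith)]
    simp
  have hae : ∀ᵐ z ∂μ.map X, z ∈ ({1, -1, 0} : Finset ℤ) :=
    (prob_compl_eq_zero_iff (Finset.measurableSet _)).2 hsupp
  rw [Measure.ae_mem_finset_iff.1 hae, threePoint]
  simp [hmap, h1, h2, h0, add_assoc]

lemma ae_tendsto_sum_atBot_of_integral_neg {X : ℕ → Ω → ℝ} (hint : Integrable (X 0) μ)
    (hindep : Pairwise fun i j => IndepFun (X i) (X j) μ)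
    (hident : ∀ i, IdentDistrib (X i) (X 0) μ μ) (hneg : ∫ ω, X 0 ω ∂μ < 0) :
    ∀ᵐ ω ∂μ, Tendsto (fun n => ∑ i ∈ range n, X i ω) atTop atBot := by
  filter_upwards [strong_law_ae X hint hindep hident] with ω hω
  refine (tendsto_natCast_atTop_atTop.atTop_mul_neg hneg hω).congr' ?_
  filter_upwards [eventually_ne_atTop 0] with n hn
  rw [smul_eq_mul, mul_inv_cancel_left₀ (Nat.cast_ne_zero.2 hn)]

lemma ProbabilityTheory.iIndepFun.indepFun_of_measurable_iSup_lt {β γ : Type*}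
    [mβ : MeasurableSpace β] [MeasurableSpace γ] {X : ℕ → Ω → β} (hmeas : ∀ i, Measurable (X i))
    (hX : iIndepFun X μ) {n : ℕ} {f : Ω → γ} (hf : Measurable[⨆ i < n, mβ.comap (X i)] f) :
    IndepFun f (X n) μ := by
  have := indep_iSup_of_disjoint (fun i => (hmeas i).comap_le) hX.iIndep
    (S := Set.Iio n) (T := {n}) (by simp)
  rw [_root_.iSup_singleton] at this
  rw [IndepFun_iff_Indep]
  exact indep_of_indep_of_le_left this hf.comap_le

variable {step G : ℕ → Ω → ℤ} {M : ℕ} {r : ℝ}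

lemma ae_tendsto_walk_atBot_of_integral_neg (hindep : iIndepFun step μ)
    (hident : ∀ i, IdentDistrib (step i) (step 0) μ μ)
    (hint : Integrable (fun ω => (step 0 ω : ℝ)) μ) (hneg : ∫ ω, (step 0 ω : ℝ) ∂μ < 0)
    (hG : ∀ n ω, G (n + 1) ω = G n ω + step n ω) :
    ∀ᵐ ω ∂μ, Tendsto (G · ω) atTop atBot := by
  have hcast : Measurable (Int.cast : ℤ → ℝ) := measurable_of_countable _
  filter_upwards [ae_tendsto_sum_atBot_of_integral_neg (X := fun i ω => (step i ω : ℝ)) hint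
    (fun i j hij => (hindep.indepFun hij).comp hcast hcast) (fun i => (hident i).comp hcast)
    hneg] with ω hω
  rw [← tendsto_intCast_atBot_iff (R := ℝ)]
  refine (tendsto_atBot_add_const_left _ (G 0 ω : ℝ) hω).congr fun n => ?_
  rw [Finset.eq_sum_range_sub (G · ω) n]
  simp [hG]

lemma measurable_walk_of_le {m : MeasurableSpace Ω} {a : ℤ} (hG0 : ∀ ω, G 0 ω = a)
    (hG : ∀ n ω, G (n + 1) ω = G n ω + step n ω) {n : ℕ}
    (hstep : ∀ i < n, Measurable[m] (step i)) : ∀ k ≤ n, Measurable[m] (G k) := by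
  intro k hk
  induction k with
  | zero =>
    rw [show G 0 = fun _ => a from funext hG0]
    exact measurable_const
  | succ k ih =>
    rw [show G (k + 1) = fun ω => G k ω + step k ω from funext (hG k)]
    exact (ih (by omega)).add (hstep k (by omega))

lemma measurableSet_exists_le_eq_zero {m : MeasurableSpace Ω} {n : ℕ}
    (hG : ∀ k ≤ n, Measurable[m] (G k)) :
    MeasurableSet[m] {ω | ∃ k ≤ n, G k ω = 0} := by
  have : {ω | ∃ k ≤ n, G k ω = 0} = ⋃ k ∈ Finset.range (n + 1), G k ⁻¹' {0} := by
    ext; simp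
  rw [this]
  exact Finset.measurableSet_biUnion _ fun k hk =>
    hG k (Nat.lt_succ_iff.1 (Finset.mem_range.1 hk)) (measurableSet_singleton 0)

lemma measurable_stoppedExp {m : MeasurableSpace Ω} {n : ℕ} (hG : ∀ k ≤ n, Measurable[m] (G k)) :
    Measurable[m] fun ω => stoppedExp r (G · ω) n :=
  Measurable.ite (measurableSet_exists_le_eq_zero hG) measurable_const
    ((measurable_of_countable fun z : ℤ => r ^ (-z)).comp (hG n le_rfl))

lemma ae_stoppedExp_mem_Icc (hr0 : 0 < r) (hr1 : r ≤ 1) (hle : ∀ i, ∀ᵐ ω ∂μ, step i ω ≤ 1)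
    (hG0 : ∀ ω, G 0 ω = -M) (hG : ∀ n ω, G (n + 1) ω = G n ω + step n ω) :
    ∀ᵐ ω ∂μ, ∀ n, stoppedExp r (G · ω) n ∈ Set.Icc 0 1 := by
  filter_upwards [ae_all_iff.2 hle] with ω hω n
  exact stoppedExp_mem_Icc hr0 hr1 (by simp [hG0]) (fun n => by rw [hG]; linarith [hω n]) n

lemma integral_stoppedExp_eq [IsProbabilityMeasure μ] (hr0 : 0 < r) (hr1 : r ≤ 1)
    (hmeas : ∀ i, Measurable (step i)) (hindep : iIndepFun step μ)
    (hle : ∀ i, ∀ᵐ ω ∂μ, step i ω ≤ 1) (hmean : ∀ i, ∫ ω, r ^ (-step i ω) ∂μ = 1)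
    (hG0 : ∀ ω, G 0 ω = -M) (hG : ∀ n ω, G (n + 1) ω = G n ω + step n ω) (n : ℕ) :
    ∫ ω, stoppedExp r (G · ω) n ∂μ = r ^ M := by
  have hY_int (n : ℕ) : Integrable (fun ω => stoppedExp r (G · ω) n) μ :=
    .of_mem_Icc 0 1
      (measurable_stoppedExp (r := r)
        (measurable_walk_of_le hG0 hG fun i _ => hmeas i)).aemeasurable
      ((ae_stoppedExp_mem_Icc hr0 hr1 hle hG0 hG).mono fun ω h => h n)
  induction n with
  | zero => simp [stoppedExp_zero, hG0]
  | succ n ih =>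
    set Z : Ω → ℝ := fun ω => if ∃ k ≤ n, G k ω = 0 then 0 else r ^ (-G n ω)
    have hc : Measurable fun z : ℤ => r ^ (-z) - 1 := measurable_of_countable _
    have hpast_le : ⨆ i < n, MeasurableSpace.comap (step i) inferInstance ≤ mΩ :=
      iSup₂_le fun i _ => (hmeas i).comap_le
    have hZ : Measurable[⨆ i < n, MeasurableSpace.comap (step i) inferInstance] Z := by
      have hGpast := measurable_walk_of_le (n := n) hG0 hG fun i hi =>
        (comap_measurable (step i)).mono (le_iSup₂_of_le i hi le_rfl) le_rfl
      exact Measurable.ite (measurableSet_exists_le_eq_zero hGpast) measurable_const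
        ((measurable_of_countable fun z : ℤ => r ^ (-z)).comp (hGpast n le_rfl))
    have hindep_n : IndepFun Z (fun ω => r ^ (-step n ω) - 1) μ :=
      (hindep.indepFun_of_measurable_iSup_lt hmeas hZ).comp measurable_id hc
    have hcentred : ∫ ω, (r ^ (-step n ω) - 1) ∂μ = 0 := by
      rw [integral_sub (.of_integral_ne_zero (by rw [hmean n]; exact one_ne_zero))
        (integrable_const 1), hmean n]
      simp
    calc ∫ ω, stoppedExp r (G · ω) (n + 1) ∂μ
        = ∫ ω, stoppedExp r (G · ω) n ∂μ
          + ∫ ω, (stoppedExp r (G · ω) (n + 1) - stoppedExp r (G · ω) n) ∂μ := by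
          rw [integral_sub (hY_int _) (hY_int _)]; ring
      _ = r ^ M + ∫ ω, Z ω * (r ^ (-step n ω) - 1) ∂μ := by
          rw [ih]
          congr 1
          exact integral_congr_ae (ae_of_all _ fun ω => stoppedExp_succ_sub hr0.ne' (hG n ω))
      _ = r ^ M := by
          rw [hindep_n.integral_fun_mul_eq_mul_integral
            ((hZ.mono hpast_le le_rfl).aestronglyMeasurable)
            (hc.comp (hmeas n)).aestronglyMeasurable, hcentred, mul_zero, add_zero]

theorem measure_exists_eq_zero_eq_pow [IsProbabilityMeasure μ] (hr0 : 0 < r) (hr1 : r < 1)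
    (hmeas : ∀ i, Measurable (step i)) (hindep : iIndepFun step μ)
    (hle : ∀ i, ∀ᵐ ω ∂μ, step i ω ≤ 1) (hmean : ∀ i, ∫ ω, r ^ (-step i ω) ∂μ = 1)
    (hG0 : ∀ ω, G 0 ω = -M) (hG : ∀ n ω, G (n + 1) ω = G n ω + step n ω)
    (hdrift : ∀ᵐ ω ∂μ, Tendsto (G · ω) atTop atBot) :
    μ {ω | ∃ n, G n ω = 0} = ENNReal.ofReal (r ^ M) := by
  have hGm (n : ℕ) : Measurable (G n) :=
    measurable_walk_of_le hG0 hG (fun i _ => hmeas i) n le_rfl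
  have hA : MeasurableSet {ω | ∃ n, G n ω = 0} := by
    rw [Set.ofPred_exists]
    exact MeasurableSet.iUnion fun n => hGm n (measurableSet_singleton 0)
  have hlim : Tendsto (fun n => ∫ ω, stoppedExp r (G · ω) n ∂μ) atTop
      (𝓝 (μ.real {ω | ∃ n, G n ω = 0})) := by
    rw [← integral_indicator_one hA]
    exact tendsto_integral_of_dominated_convergence (fun _ => 1)
      (fun n => (measurable_stoppedExp (r := r) fun k _ => hGm k).aestronglyMeasurable)
      (integrable_const 1)
      (fun n => (ae_stoppedExp_mem_Icc hr0 hr1.le hle hG0 hG).mono fun ω h =>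
        abs_le.2 ⟨by linarith [(h n).1], (h n).2⟩)
      (hdrift.mono fun ω hω => tendsto_stoppedExp hr0.le hr1 hω)
  simp only [integral_stoppedExp_eq hr0 hr1.le hmeas hindep hle hmean hG0 hG] at hlim
  rw [tendsto_nhds_unique tendsto_const_nhds hlim, measureReal_def,
    ENNReal.ofReal_toReal (measure_ne_top μ _)]

end Probability

lemma exp_sub_one_add_exp_neg_le {α : ℝ} (hα0 : 0 ≤ α) (hα1 : α ≤ 1) :
    Real.exp (α - 1) + Real.exp (-α) ≤ 1 + Real.exp (-1) := by
  -- `(1 - e^(-α)) (1 - e^(α-1))` is the probability of leaders of both kinds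
  have h : 1 + Real.exp (-1) - Real.exp (α - 1) - Real.exp (-α) =
      (1 - Real.exp (-α)) * (1 - Real.exp (α - 1)) := by
    rw [show Real.exp (-1) = Real.exp (-α) * Real.exp (α - 1) by rw [← Real.exp_add]; ring_nf]
    ring
  have h1 : Real.exp (-α) ≤ 1 := Real.exp_le_one_iff.2 (by linarith)
  have h2 : Real.exp (α - 1) ≤ 1 := Real.exp_le_one_iff.2 (by linarith)
  linarith [mul_nonneg (sub_nonneg.2 h1) (sub_nonneg.2 h2)]

lemma exp_sub_one_div_exp_sub_one (α : ℝ) :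
    (Real.exp α - 1) / (Real.exp (1 - α) - 1) =
      (Real.exp (α - 1) - Real.exp (-1)) / (Real.exp (-α) - Real.exp (-1)) := by
  rw [← mul_div_mul_right _ _ (Real.exp_ne_zero (-1)), sub_mul, sub_mul, ← Real.exp_add,
    ← Real.exp_add, one_mul, ← sub_eq_add_neg, ← sub_eq_add_neg, sub_sub_cancel_left]

theorem ple_catchup_probability_general
    {Ω : Type*} [MeasureSpace Ω] [IsProbabilityMeasure (ℙ : Measure Ω)]
    (α : ℝ) (hα0 : 0 < α) (hα : α < 1/2)
    (M : ℕ)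
    (step : ℕ → Ω → ℤ)
    (hmeas : ∀ i, Measurable (step i))
    (hindep : iIndepFun step ℙ)
    (hup : ∀ i, ℙ {ω | step i ω = 1} =
      ENNReal.ofReal (Real.exp (α - 1) - Real.exp (-1)))
    (hdown : ∀ i, ℙ {ω | step i ω = -1} =
      ENNReal.ofReal (Real.exp (-α) - Real.exp (-1)))
    (hnull : ∀ i, ℙ {ω | step i ω = 0} =
      ENNReal.ofReal (1 - (Real.exp (α - 1) - Real.exp (-1))
        - (Real.exp (-α) - Real.exp (-1))))
    (G : ℕ → Ω → ℤ) (hG0 : ∀ ω, G 0 ω = -(M : ℤ))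
    (hG : ∀ n ω, G (n+1) ω = G n ω + step n ω) :
    ℙ {ω | ∃ n, G n ω = 0} =
      ENNReal.ofReal (((Real.exp α - 1) / (Real.exp (1 - α) - 1)) ^ M) := by
  rw [exp_sub_one_div_exp_sub_one]
  set p := Real.exp (α - 1) - Real.exp (-1) with hp_def
  set q := Real.exp (-α) - Real.exp (-1) with hq_def
  have hrest : 0 ≤ 1 - p - q := by
    rw [hp_def, hq_def]
    linarith [exp_sub_one_add_exp_neg_le hα0.le (by linarith), Real.exp_pos (-1)]
  have hp : 0 < p := sub_pos.2 (Real.exp_lt_exp.2 (by linarith))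
  have hpq : p < q := sub_lt_sub_right (Real.exp_lt_exp.2 (by linarith)) _
  have hq : 0 < q := hp.trans hpq
  have hlaw (i : ℕ) : (ℙ : Measure Ω).map (step i) = threePoint p q :=
    map_eq_threePoint (hmeas i) hp.le hq.le hrest (hup i) (hdown i) (hnull i)
  have hintegral (f : ℤ → ℝ) (i : ℕ) :
      ∫ ω, f (step i ω) = p * f 1 + q * f (-1) + (1 - p - q) * f 0 := by
    rw [← integral_map (hmeas i).aemeasurable (measurable_of_countable f).aestronglyMeasurable,
      hlaw, integral_threePoint hp.le hq.le hrest]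
  have hdrift : ∫ ω, (step 0 ω : ℝ) = p - q :=
    (hintegral (fun z => (z : ℝ)) 0).trans (by push_cast; ring)
  refine measure_exists_eq_zero_eq_pow (div_pos hp hq) ((div_lt_one hq).2 hpq) hmeas hindep
    (fun i => ae_of_ae_map (hmeas i).aemeasurable (hlaw i ▸ ae_le_one_threePoint p q))
    (fun i => (hintegral (fun z => (p / q) ^ (-z)) i).trans ?_) hG0 hG
    (ae_tendsto_walk_atBot_of_integral_neg hindep
      (fun i => ⟨(hmeas i).aemeasurable, (hmeas 0).aemeasurable, (hlaw i).trans (hlaw 0).symm⟩)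
      (.of_integral_ne_zero (by rw [hdrift]; linarith)) (by rw [hdrift]; linarith) hG)
  simp only [zpow_neg, zpow_one, zpow_zero, inv_div, inv_one]
  field_simp
  ring

theorem ple_catchup_probability
    {Ω : Type*} [MeasureSpace Ω] [IsProbabilityMeasure (ℙ : Measure Ω)]
    (α : ℝ) (hα0 : 0 < α) (hα : α < 1/2)
    (M : ℕ) (hM : 0 < M)
    (step : ℕ → Ω → ℤ)
    (hmeas : ∀ i, Measurable (step i))
    (hindep : iIndepFun step ℙ)
    (hup : ∀ i, ℙ {ω | step i ω = 1} =
      ENNReal.ofReal (Real.exp (α - 1) - Real.exp (-1)))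
    (hdown : ∀ i, ℙ {ω | step i ω = -1} =
      ENNReal.ofReal (Real.exp (-α) - Real.exp (-1)))
    (hnull : ∀ i, ℙ {ω | step i ω = 0} =
      ENNReal.ofReal (1 - (Real.exp (α - 1) - Real.exp (-1))
        - (Real.exp (-α) - Real.exp (-1))))
    (G : ℕ → Ω → ℤ) (hG0 : ∀ ω, G 0 ω = -(M : ℤ))
    (hG : ∀ n ω, G (n+1) ω = G n ω + step n ω) :
    ℙ {ω | ∃ n, G n ω = 0} =
      ENNReal.ofReal (((Real.exp α - 1) / (Real.exp (1 - α) - 1)) ^ M) :=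
  ple_catchup_probability_general α hα0 hα M step hmeas hindep hup hdown hnull G hG0 hG
end

section
/- For all α ∈ (0, 1/2), (e^α − 1)/(e^{1−α} − 1) < α/(1−α). -/
open Real

lemma aux_num_pos {x : ℝ} (hx : 0 < x) : 0 < Real.exp x * x - (Real.exp x - 1) := by
  have h1 : (-x) + 1 < Real.exp (-x) := Real.add_one_lt_exp (by linarith)
  have h2 : Real.exp (-x) * Real.exp x = 1 := by
    rw [← Real.exp_add]; simp
  nlinarith [Real.exp_pos x, Real.exp_pos (-x)]

lemma ratio_strictMono : StrictMonoOn (fun x : ℝ => (Real.exp x - 1) / x) (Set.Ioi 0) := by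
  have hderiv : ∀ x ∈ interior (Set.Ioi (0:ℝ)),
      0 < deriv (fun x : ℝ => (Real.exp x - 1) / x) x := by
    intro x hx
    rw [interior_Ioi] at hx
    have hx0 : (x : ℝ) ≠ 0 := ne_of_gt hx
    have hd : HasDerivAt (fun x : ℝ => (Real.exp x - 1) / x)
        ((Real.exp x * x - (Real.exp x - 1) * 1) / (x ^ 2)) x := by
      exact ((Real.hasDerivAt_exp x).sub_const 1).div (hasDerivAt_id x) hx0
    rw [hd.deriv]
    have h := aux_num_pos hx
    apply div_pos (by nlinarith) (by positivity)
  have hcont : ContinuousOn (fun x : ℝ => (Real.exp x - 1) / x) (Set.Ioi 0) := by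
    apply ContinuousOn.div
    · exact (Real.continuous_exp.sub continuous_const).continuousOn
    · exact continuousOn_id
    · intro x hx; exact ne_of_gt hx
  exact StrictMonoOn.mono (strictMonoOn_of_deriv_pos (convex_Ioi 0) hcont hderiv) le_rfl

theorem ple_ratio_lt_ssle_ratio (α : ℝ) (hα : α ∈ Set.Ioo (0:ℝ) (1/2)) :
    (Real.exp α - 1) / (Real.exp (1 - α) - 1) < α / (1 - α) := by
  obtain ⟨h0, h12⟩ := hα
  have hb : (0:ℝ) < 1 - α := by linarith
  have hab : α < 1 - α := by linarith
  have key := ratio_strictMono (Set.mem_Ioi.2 h0) (Set.mem_Ioi.2 hb) hab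
  simp only at key
  -- key : (exp α - 1)/α < (exp (1-α) - 1)/(1-α)
  have hden : 0 < Real.exp (1 - α) - 1 := by
    have := Real.add_one_lt_exp (x := 1 - α) (by linarith)
    linarith
  have hnum : 0 < Real.exp α - 1 := by
    have := Real.add_one_lt_exp (x := α) (by linarith)
    linarith
  rw [div_lt_div_iff₀ h0 hb] at key
  rw [div_lt_div_iff₀ hden hb]
  nlinarith
end

section
/- The function f(x) = (e^x − 1)(1 − x) is strictly monotonically increasing on the interval [0, 1/2]. -/
open Real Set

/- The derivative is `1 - x * exp x`, which stays positive up to `x = 1/2`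
because `exp (1/2) < 1 / (1 - 1/2) = 2`. -/

theorem hasDerivAt_exp_sub_one_mul_one_sub (x : ℝ) :
    HasDerivAt (fun x : ℝ => (exp x - 1) * (1 - x)) (1 - x * exp x) x := by
  refine (((hasDerivAt_exp x).sub_const 1).mul ((hasDerivAt_id' x).const_sub 1)).congr_deriv ?_
  ring

theorem exp_half_lt_two : exp (1 / 2) < 2 := by
  have h := exp_bound_div_one_sub_of_interval' (x := 1 / 2) (by norm_num) (by norm_num)
  norm_num at h
  exact h

theorem mul_exp_lt_one_of_lt_half {x : ℝ} (hx : x < 1 / 2) : x * exp x < 1 := by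
  rcases le_or_gt x 0 with hx₀ | hx₀
  · nlinarith [exp_pos x]
  · calc x * exp x < 1 / 2 * 2 :=
          mul_lt_mul'' hx ((exp_lt_exp.2 hx).trans exp_half_lt_two) hx₀.le (exp_pos x).le
      _ = 1 := by norm_num

theorem strictMonoOn_exp_sub_one_mul_one_sub_Iic :
    StrictMonoOn (fun x : ℝ => (exp x - 1) * (1 - x)) (Iic (1 / 2)) := by
  refine strictMonoOn_of_deriv_pos (convex_Iic _) (by fun_prop) fun x hx => ?_
  rw [interior_Iic] at hx
  rw [(hasDerivAt_exp_sub_one_mul_one_sub x).deriv, sub_pos]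
  exact mul_exp_lt_one_of_lt_half hx

theorem strictMonoOn_exp_sub_one_mul_one_sub :
    StrictMonoOn (fun x : ℝ => (Real.exp x - 1) * (1 - x)) (Set.Icc 0 (1/2)) :=
  strictMonoOn_exp_sub_one_mul_one_sub_Iic.mono Icc_subset_Iic_self
end

section
/- In the SSLE private game with adversarial power α ∈ (0,1), E[G_n^{SSLE}(α)] = (2α − 1)n; in the PLE private game, E[G_n^{PLE}(α)] = (e^{α−1} − e^{−α})n. Moreover for all α ∈ (0, 1/2), e^{α−1} − e^{−α} > 2α − 1, i.e., the expected gap decreases strictly faster in the SSLE game. -/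
/-!
Each increment is almost surely in `{1, -1, 0}`, because the masses it puts there already add
up to one; so its mean is `ℙ(+1) - ℙ(-1)`, and by linearity the gap after `n` steps has mean
`n` times that. For the comparison put `t = 2α - 1 < 0`: then
`e^{α-1} - e^{-α} = e^{-α} (e^t - 1) > e^t - 1 > t`, the first inequality because `e^t - 1 < 0`
and `e^{-α} < 1`.
-/

open MeasureTheory ProbabilityTheory

lemma ENNReal.one_le_ofReal_add_ofReal_add_ofReal_one_sub_sub (a b : ℝ) :
    1 ≤ ENNReal.ofReal a + ENNReal.ofReal b + ENNReal.ofReal (1 - a - b) :=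
  calc (1 : ENNReal) = ENNReal.ofReal (a + b + (1 - a - b)) := by
        rw [show a + b + (1 - a - b) = 1 by ring, ENNReal.ofReal_one]
    _ ≤ ENNReal.ofReal (a + b) + ENNReal.ofReal (1 - a - b) := ENNReal.ofReal_add_le
    _ ≤ _ := by gcongr; exact ENNReal.ofReal_add_le

section FiniteSupport

variable {Ω β : Type*} [MeasurableSpace Ω] {μ : Measure Ω} {X : Ω → β} {s : Finset β}

lemma comp_ae_eq_sum_indicator_of_ae_mem (hs : ∀ᵐ ω ∂μ, X ω ∈ s) (g : β → ℝ) :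
    (fun ω ↦ g (X ω)) =ᵐ[μ] fun ω ↦ ∑ k ∈ s, (X ⁻¹' {k}).indicator (fun _ ↦ g k) ω := by
  filter_upwards [hs] with ω hω
  rw [Finset.sum_eq_single_of_mem (X ω) hω]
  · simp
  · intro k _ hk
    simp [Ne.symm hk]

variable [MeasurableSpace β] [MeasurableSingletonClass β]

lemma ae_mem_of_one_le_sum_measure_preimage_singleton [IsProbabilityMeasure μ]
    (hX : Measurable X) (h : 1 ≤ ∑ k ∈ s, μ (X ⁻¹' {k})) : ∀ᵐ ω ∂μ, X ω ∈ s := by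
  rw [sum_measure_preimage_singleton s fun k _ ↦ hX (measurableSet_singleton k)] at h
  exact (ae_mem_iff_measure_eq (hX s.measurableSet).nullMeasurableSet).2
    (by simpa using le_antisymm prob_le_one h)

variable [IsFiniteMeasure μ]

lemma integrable_indicator_preimage_singleton (hX : Measurable X) (g : β → ℝ) (k : β) :
    Integrable ((X ⁻¹' {k}).indicator fun _ ↦ g k) μ :=
  (integrable_const (g k)).indicator (hX (measurableSet_singleton k))

lemma integrable_comp_of_ae_mem (hX : Measurable X) (hs : ∀ᵐ ω ∂μ, X ω ∈ s) (g : β → ℝ) :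
    Integrable (fun ω ↦ g (X ω)) μ :=
  (integrable_finsetSum _ fun k _ ↦ integrable_indicator_preimage_singleton hX g k).congr
    (comp_ae_eq_sum_indicator_of_ae_mem hs g).symm

lemma integral_comp_of_ae_mem (hX : Measurable X) (hs : ∀ᵐ ω ∂μ, X ω ∈ s) (g : β → ℝ) :
    ∫ ω, g (X ω) ∂μ = ∑ k ∈ s, μ.real (X ⁻¹' {k}) * g k := by
  rw [integral_congr_ae (comp_ae_eq_sum_indicator_of_ae_mem hs g),
    integral_finsetSum _ fun k _ ↦ integrable_indicator_preimage_singleton hX g k]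
  refine Finset.sum_congr rfl fun k _ ↦ ?_
  rw [integral_indicator_const _ (hX (measurableSet_singleton k)), smul_eq_mul]

end FiniteSupport

section LazyStep

variable {Ω : Type*} [MeasurableSpace Ω] {μ : Measure Ω} [IsProbabilityMeasure μ] {X : Ω → ℤ}
  {a b : ℝ}

lemma ae_mem_of_lazy_step (hX : Measurable X)
    (hfull : 1 ≤ μ {ω | X ω = 1} + μ {ω | X ω = -1} + μ {ω | X ω = 0}) :
    ∀ᵐ ω ∂μ, X ω ∈ ({1, -1, 0} : Finset ℤ) :=
  ae_mem_of_one_le_sum_measure_preimage_singleton hX <| by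
    rwa [Finset.sum_insert (show (1 : ℤ) ∉ ({-1, 0} : Finset ℤ) by decide),
      Finset.sum_pair (show (-1 : ℤ) ≠ 0 by decide), ← add_assoc]

lemma integrable_of_lazy_step (hX : Measurable X)
    (hfull : 1 ≤ μ {ω | X ω = 1} + μ {ω | X ω = -1} + μ {ω | X ω = 0}) :
    Integrable (fun ω ↦ (X ω : ℝ)) μ :=
  integrable_comp_of_ae_mem hX (ae_mem_of_lazy_step hX hfull) _

lemma integral_eq_sub_of_lazy_step (hX : Measurable X) (ha : 0 ≤ a) (hb : 0 ≤ b)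
    (hfull : 1 ≤ μ {ω | X ω = 1} + μ {ω | X ω = -1} + μ {ω | X ω = 0})
    (h1 : μ {ω | X ω = 1} = ENNReal.ofReal a) (h2 : μ {ω | X ω = -1} = ENNReal.ofReal b) :
    ∫ ω, (X ω : ℝ) ∂μ = a - b := by
  rw [integral_comp_of_ae_mem hX (ae_mem_of_lazy_step hX hfull)]
  simp only [Finset.sum_insert (show (1 : ℤ) ∉ ({-1, 0} : Finset ℤ) by decide),
    Finset.sum_pair (show (-1 : ℤ) ≠ 0 by decide), Set.preimage, Set.mem_singleton_iff,
    measureReal_def, h1, h2, ENNReal.toReal_ofReal ha, ENNReal.toReal_ofReal hb]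
  push_cast
  ring

end LazyStep

lemma integral_eq_mul_of_integral_increment_eq {Ω : Type*} [MeasurableSpace Ω] {μ : Measure Ω}
    {step : ℕ → Ω → ℤ} {c : ℝ} (hint : ∀ i, Integrable (fun ω ↦ (step i ω : ℝ)) μ)
    (hmean : ∀ i, ∫ ω, (step i ω : ℝ) ∂μ = c)
    {G : ℕ → Ω → ℤ} (hG0 : ∀ ω, G 0 ω = 0) (hG : ∀ n ω, G (n + 1) ω = G n ω + step n ω)
    (n : ℕ) : ∫ ω, (G n ω : ℝ) ∂μ = c * n := by
  have hsum : ∀ ω, ∑ i ∈ Finset.range n, (step i ω : ℝ) = G n ω := fun ω ↦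
    Finset.sum_range_induction _ (fun m ↦ (G m ω : ℝ)) (by simp [hG0]) n
      fun m _ ↦ by simp [hG]
  simp_rw [← hsum]
  rw [integral_finsetSum _ fun i _ ↦ hint i]
  simp [hmean, mul_comm]

lemma two_mul_sub_one_lt_exp_sub_one_sub_exp_neg {α : ℝ} (h0 : 0 < α) (h : α < 1 / 2) :
    2 * α - 1 < Real.exp (α - 1) - Real.exp (-α) := by
  have hlin : 2 * α - 1 < Real.exp (2 * α - 1) - 1 := by
    linarith [Real.add_one_lt_exp (show 2 * α - 1 ≠ 0 by linarith)]
  have hneg : Real.exp (2 * α - 1) - 1 < 0 := by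
    linarith [Real.exp_lt_one_iff.mpr (show 2 * α - 1 < 0 by linarith)]
  have hc : Real.exp (-α) < 1 := Real.exp_lt_one_iff.mpr (by linarith)
  calc 2 * α - 1 < Real.exp (2 * α - 1) - 1 := hlin
    _ < Real.exp (-α) * (Real.exp (2 * α - 1) - 1) := by nlinarith
    _ = Real.exp (α - 1) - Real.exp (-α) := by rw [mul_sub, ← Real.exp_add]; ring_nf

theorem expected_gap_ssle_ple_general
    {Ω : Type*} [MeasureSpace Ω] [IsProbabilityMeasure (ℙ : Measure Ω)]
    (α : ℝ) (hα : α ∈ Set.Ioo (0:ℝ) 1)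
    -- the SSLE gap: a ±1 random walk with up-probability α
    (stepS : ℕ → Ω → ℤ)
    (hmeasS : ∀ i, Measurable (stepS i))
    (hupS : ∀ i, ℙ {ω | stepS i ω = 1} = ENNReal.ofReal α)
    (hdownS : ∀ i, ℙ {ω | stepS i ω = -1} = ENNReal.ofReal (1 - α))
    (GS : ℕ → Ω → ℤ) (hGS0 : ∀ ω, GS 0 ω = 0)
    (hGS : ∀ n ω, GS (n+1) ω = GS n ω + stepS n ω)
    -- the PLE gap: a lazy random walk with up-probability pₐ = e^{α-1} - e^{-1}
    -- and down-probability p_h = e^{-α} - e^{-1}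
    (stepP : ℕ → Ω → ℤ)
    (hmeasP : ∀ i, Measurable (stepP i))
    (hupP : ∀ i, ℙ {ω | stepP i ω = 1} =
      ENNReal.ofReal (Real.exp (α - 1) - Real.exp (-1)))
    (hdownP : ∀ i, ℙ {ω | stepP i ω = -1} =
      ENNReal.ofReal (Real.exp (-α) - Real.exp (-1)))
    (hnullP : ∀ i, ℙ {ω | stepP i ω = 0} =
      ENNReal.ofReal (1 - (Real.exp (α - 1) - Real.exp (-1))
        - (Real.exp (-α) - Real.exp (-1))))
    (GP : ℕ → Ω → ℤ) (hGP0 : ∀ ω, GP 0 ω = 0)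
    (hGP : ∀ n ω, GP (n+1) ω = GP n ω + stepP n ω)
    (n : ℕ) :
    (∫ ω, ((GS n ω : ℝ)) ∂ℙ = (2 * α - 1) * n) ∧
    (∫ ω, ((GP n ω : ℝ)) ∂ℙ = (Real.exp (α - 1) - Real.exp (-α)) * n) ∧
    (α < 1/2 → Real.exp (α - 1) - Real.exp (-α) > 2 * α - 1) := by
  obtain ⟨h0, h1⟩ := hα
  set pa := Real.exp (α - 1) - Real.exp (-1)
  set ph := Real.exp (-α) - Real.exp (-1)
  have hpa : 0 ≤ pa := by linarith [Real.exp_le_exp.mpr (show (-1 : ℝ) ≤ α - 1 by linarith)]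
  have hph : 0 ≤ ph := by linarith [Real.exp_le_exp.mpr (show (-1 : ℝ) ≤ -α by linarith)]
  have hfullS : ∀ i,
      1 ≤ ℙ {ω | stepS i ω = 1} + ℙ {ω | stepS i ω = -1} + ℙ {ω | stepS i ω = 0} :=
    fun i ↦ le_add_right <| by rw [hupS, hdownS, ← ENNReal.ofReal_add h0.le (by linarith)]; simp
  have hfullP : ∀ i,
      1 ≤ ℙ {ω | stepP i ω = 1} + ℙ {ω | stepP i ω = -1} + ℙ {ω | stepP i ω = 0} := fun i ↦ by
    rw [hupP, hdownP, hnullP]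
    exact ENNReal.one_le_ofReal_add_ofReal_add_ofReal_one_sub_sub pa ph
  refine ⟨?_, ?_, two_mul_sub_one_lt_exp_sub_one_sub_exp_neg h0⟩
  · have hmean : ∀ i, ∫ ω, (stepS i ω : ℝ) ∂ℙ = 2 * α - 1 := fun i ↦ by
      rw [integral_eq_sub_of_lazy_step (hmeasS i) h0.le (by linarith) (hfullS i) (hupS i)
        (hdownS i)]
      ring
    exact integral_eq_mul_of_integral_increment_eq
      (fun i ↦ integrable_of_lazy_step (hmeasS i) (hfullS i)) hmean hGS0 hGS n
  · have hmean : ∀ i, ∫ ω, (stepP i ω : ℝ) ∂ℙ = Real.exp (α - 1) - Real.exp (-α) := fun i ↦ by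
      rw [integral_eq_sub_of_lazy_step (hmeasP i) hpa hph (hfullP i) (hupP i) (hdownP i)]
      ring
    exact integral_eq_mul_of_integral_increment_eq
      (fun i ↦ integrable_of_lazy_step (hmeasP i) (hfullP i)) hmean hGP0 hGP n

theorem expected_gap_ssle_ple
    {Ω : Type*} [MeasureSpace Ω] [IsProbabilityMeasure (ℙ : Measure Ω)]
    (α : ℝ) (hα : α ∈ Set.Ioo (0:ℝ) 1)
    -- the SSLE gap: a ±1 random walk with up-probability α
    (stepS : ℕ → Ω → ℤ)
    (hmeasS : ∀ i, Measurable (stepS i))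
    (hindepS : iIndepFun stepS ℙ)
    (hupS : ∀ i, ℙ {ω | stepS i ω = 1} = ENNReal.ofReal α)
    (hdownS : ∀ i, ℙ {ω | stepS i ω = -1} = ENNReal.ofReal (1 - α))
    (GS : ℕ → Ω → ℤ) (hGS0 : ∀ ω, GS 0 ω = 0)
    (hGS : ∀ n ω, GS (n+1) ω = GS n ω + stepS n ω)
    -- the PLE gap: a lazy random walk with up-probability pₐ = e^{α-1} - e^{-1}
    -- and down-probability p_h = e^{-α} - e^{-1}
    (stepP : ℕ → Ω → ℤ)
    (hmeasP : ∀ i, Measurable (stepP i))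
    (hindepP : iIndepFun stepP ℙ)
    (hupP : ∀ i, ℙ {ω | stepP i ω = 1} =
      ENNReal.ofReal (Real.exp (α - 1) - Real.exp (-1)))
    (hdownP : ∀ i, ℙ {ω | stepP i ω = -1} =
      ENNReal.ofReal (Real.exp (-α) - Real.exp (-1)))
    (hnullP : ∀ i, ℙ {ω | stepP i ω = 0} =
      ENNReal.ofReal (1 - (Real.exp (α - 1) - Real.exp (-1))
        - (Real.exp (-α) - Real.exp (-1))))
    (GP : ℕ → Ω → ℤ) (hGP0 : ∀ ω, GP 0 ω = 0)
    (hGP : ∀ n ω, GP (n+1) ω = GP n ω + stepP n ω)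
    (n : ℕ) :
    (∫ ω, ((GS n ω : ℝ)) ∂ℙ = (2 * α - 1) * n) ∧
    (∫ ω, ((GP n ω : ℝ)) ∂ℙ = (Real.exp (α - 1) - Real.exp (-α)) * n) ∧
    (α < 1/2 → Real.exp (α - 1) - Real.exp (-α) > 2 * α - 1) :=
  expected_gap_ssle_ple_general α hα stepS hmeasS hupS hdownS GS hGS0 hGS stepP hmeasP hupP hdownP
    hnullP GP hGP0 hGP n
end

section
/- Let (G_n) be a simple random walk on ℤ with G_0 = 0, up-probability α ∈ (0, 1/2), down-probability 1−α. The probability that G_m ≥ 0 for some m ≥ n equals Σ_{v=0, n+v even}^{n} Bin(α,n,(n+v)/2) + Σ_{v=1, n−v even}^{n} Bin(1−α,n,(n−v)/2), where Bin(p,n,k) = C(n,k)p^k(1−p)^{n−k}. -/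
/-!
Record only whether each step goes up. If `U` is the set of up-steps among the first `n`, the walk
stands at `2 #U - n` at time `n`, and by independence the remaining steps form a fresh walk, so the
probability is `∑_U α^#U (1-α)^(n-#U) h(n - 2 #U)`, where `h w` is the probability that the walk
ever reaches level `w` (`h w = 1` for `w ≤ 0`).

For `w ≥ 0`, a path that first reaches `w` at time `i` has exactly `w` more up- than
down-steps, so its probability is `(α/(1-α))^w` times its probability for the sequence of
reversed steps, whose up-probability is `1 - α`. Summing over `i`,
`h w = (α/(1-α))^w · P(the reversed walk reaches w)`, and the reversed walk has drift
`1 - 2α > 0`, so by the strong law of large numbers it reaches `w` almost surely. Grouping the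
sets `U` by their size gives the two binomial sums, according to whether `2 #U ≥ n`.
-/

open MeasureTheory ProbabilityTheory Finset Filter Topology

namespace BernoulliWalk

def stepOf (b : Bool) : ℤ := if b then 1 else -1

def walk (s : ℕ → Bool) (j : ℕ) : ℤ := ∑ i ∈ range j, stepOf (s i)

def upTimes (s : ℕ → Bool) (k : ℕ) : Finset ℕ := (range k).filter fun i => s i

def FirstHit (w : ℤ) (s : ℕ → Bool) (i : ℕ) : Prop :=
  w ≤ walk s i ∧ ∀ l < i, walk s l < w

instance (w : ℤ) (s : ℕ → Bool) (i : ℕ) : Decidable (FirstHit w s i) :=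
  inferInstanceAs (Decidable (_ ∧ _))

section Paths

variable {s t : ℕ → Bool} {w : ℤ} {i j k : ℕ} {U : Finset ℕ}

@[simp] lemma walk_zero : walk s 0 = 0 := rfl

lemma walk_succ : walk s (j + 1) = walk s j + stepOf (s j) := sum_range_succ _ _

lemma walk_add (s : ℕ → Bool) (k j : ℕ) :
    walk s (k + j) = walk s k + walk (fun i => s (k + i)) j :=
  sum_range_add _ _ _

lemma walk_not (s : ℕ → Bool) (j : ℕ) : walk (fun i => !s i) j = -walk s j := by
  rw [walk, walk, ← sum_neg_distrib]
  exact sum_congr rfl fun i _ => by cases s i <;> rfl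

lemma walk_congr (h : ∀ i < j, s i = t i) : walk s j = walk t j :=
  sum_congr rfl fun i hi => by rw [h i (mem_range.1 hi)]

lemma upTimes_subset : upTimes s k ⊆ range k := filter_subset _ _

lemma card_upTimes_succ : #(upTimes s (j + 1)) = #(upTimes s j) + if s j then 1 else 0 := by
  rw [upTimes, upTimes, range_add_one, filter_insert]
  split_ifs with h
  · exact card_insert_of_notMem fun hj => by simp at hj
  · rfl

lemma walk_eq_two_mul_card_upTimes_sub : walk s j = 2 * #(upTimes s j) - j := by
  induction j with
  | zero => simp [upTimes]
  | succ j ih =>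
    rw [walk_succ, ih, card_upTimes_succ]
    cases s j <;> simp [stepOf] <;> ring

lemma upTimes_eq_iff (hU : U ⊆ range k) :
    upTimes s k = U ↔ ∀ i < k, s i = decide (i ∈ U) := by
  constructor
  · rintro rfl i hi
    simp [upTimes, hi]
  · intro h
    ext i
    by_cases hi : i < k
    · simp [upTimes, hi, h i hi]
    · simp only [upTimes, mem_filter, mem_range, hi, false_and, false_iff]
      exact fun hiU => hi (mem_range.1 (hU hiU))

lemma walk_decide_mem (hU : U ⊆ range k) :
    walk (fun i => decide (i ∈ U)) k = 2 * #U - k := by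
  rw [walk_eq_two_mul_card_upTimes_sub, (upTimes_eq_iff hU).2 fun _ _ => rfl]

lemma FirstHit.congr (h : ∀ l < i, s l = t l) : FirstHit w s i ↔ FirstHit w t i := by
  simp only [FirstHit]
  rw [walk_congr h]
  exact and_congr_right' <| forall₂_congr fun l hl => by
    rw [walk_congr fun m hm => h m (hm.trans hl)]

lemma firstHit_iff_upTimes :
    FirstHit w s i ↔ FirstHit w (fun l => decide (l ∈ upTimes s i)) i :=
  FirstHit.congr fun l hl => by simp [upTimes, hl]

lemma FirstHit.walk_eq (h : FirstHit w s i) (hw : 0 ≤ w) : walk s i = w := by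
  obtain ⟨hge, hlt⟩ := h
  cases i with
  | zero => simp at hge ⊢; omega
  | succ l =>
    have hl := hlt l l.lt_succ_self
    rw [walk_succ] at hge ⊢
    have hstep : stepOf (s l) ≤ 1 := by cases s l <;> decide
    omega

lemma FirstHit.unique {i' : ℕ} (h : FirstHit w s i) (h' : FirstHit w s i') : i = i' := by
  by_contra hne
  rcases Nat.lt_or_gt_of_ne hne with hlt | hlt
  · exact (h'.2 i hlt).not_ge h.1
  · exact (h.2 i' hlt).not_ge h'.1

lemma exists_le_walk_iff_exists_firstHit : (∃ j, w ≤ walk s j) ↔ ∃ i, FirstHit w s i := by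
  classical
  refine ⟨fun hex => ⟨Nat.find hex, Nat.find_spec hex, fun l hl => ?_⟩,
    fun ⟨i, hi⟩ => ⟨i, hi.1⟩⟩
  exact not_le.1 (Nat.find_min hex hl)

lemma measurable_walk (j : ℕ) : Measurable fun s : ℕ → Bool => walk s j :=
  Finset.measurable_sum _ fun i _ =>
    (Measurable.of_discrete (f := stepOf)).comp (measurable_pi_apply i)

lemma measurableSet_exists_le_walk (w : ℤ) :
    MeasurableSet {s : ℕ → Bool | ∃ j, w ≤ walk s j} := by
  simp only [Set.ofPred_exists]
  exact MeasurableSet.iUnion fun j => measurableSet_le measurable_const (measurable_walk j)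

end Paths

lemma pow_mul_one_sub_pow_eq {p : ℝ} (hp : p ≠ 1) {u i w : ℕ} (hui : u ≤ i)
    (h : 2 * u = i + w) :
    p ^ u * (1 - p) ^ (i - u) = (p / (1 - p)) ^ w * ((1 - p) ^ u * p ^ (i - u)) := by
  have hu : u = (i - u) + w := by omega
  generalize i - u = d at hu ⊢
  subst hu
  have hq : 1 - p ≠ 0 := sub_ne_zero.2 hp.symm
  rw [div_pow, pow_add, pow_add]
  field_simp

section Reindex

variable {M : Type*} [AddCommMonoid M] (f : ℕ → M) (n : ℕ)

lemma sum_range_filter_le_two_mul :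
    ∑ u ∈ range (n + 1) with n ≤ 2 * u, f u =
      ∑ v ∈ range (n + 1), if Even (n + v) then f ((n + v) / 2) else 0 := by
  rw [← sum_filter]
  refine sum_nbij' (fun u => 2 * u - n) (fun v => (n + v) / 2) ?_ ?_ ?_ ?_ ?_ <;>
    simp only [mem_filter, mem_range, Nat.even_iff] <;> intros <;>
    first | omega | (congr 1; omega)

lemma sum_range_filter_two_mul_lt :
    ∑ u ∈ range (n + 1) with ¬n ≤ 2 * u, f u =
      ∑ v ∈ Icc 1 n, if Even (n - v) then f ((n - v) / 2) else 0 := by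
  rw [← sum_filter]
  refine sum_nbij' (fun u => n - 2 * u) (fun v => (n - v) / 2) ?_ ?_ ?_ ?_ ?_ <;>
    simp only [mem_filter, mem_range, mem_Icc, Nat.even_iff] <;> intros <;>
    first | omega | (congr 1; omega)

end Reindex

-- The index `v = |2u - n|` of the two sums is the distance of the walk from `0` at time `n`.
lemma sum_choose_mul_pow_toNat_eq_sum_even {α : ℝ} (hα : α ≠ 1) (n : ℕ) :
    ∑ u ∈ range (n + 1), n.choose u *
        (α ^ u * (1 - α) ^ (n - u) * (α / (1 - α)) ^ ((n : ℤ) - 2 * u).toNat) =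
      (∑ v ∈ range (n + 1), if Even (n + v) then
          (n.choose ((n + v) / 2)) * α ^ ((n + v) / 2) * (1 - α) ^ (n - (n + v) / 2) else 0) +
      (∑ v ∈ Icc 1 n, if Even (n - v) then
          (n.choose ((n - v) / 2)) * (1 - α) ^ ((n - v) / 2) * α ^ (n - (n - v) / 2) else 0) := by
  rw [← sum_range_filter_le_two_mul (fun u => (n.choose u : ℝ) * α ^ u * (1 - α) ^ (n - u)),
    ← sum_range_filter_two_mul_lt (fun u => (n.choose u : ℝ) * (1 - α) ^ u * α ^ (n - u)),
    ← sum_filter_add_sum_filter_not _ (fun u => n ≤ 2 * u)]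
  congr 1 <;> refine sum_congr rfl fun u hu => ?_ <;> simp only [mem_filter, mem_range] at hu
  · rw [Int.toNat_of_nonpos (by omega), pow_zero, mul_one, mul_assoc]
  · have key := pow_mul_one_sub_pow_eq hα (u := n - u) (i := n) (w := n - 2 * u)
      (by omega) (by omega)
    rw [Nat.sub_sub_self (by omega)] at key
    rw [show ((n : ℤ) - 2 * u).toNat = n - 2 * u by omega]
    linear_combination -(n.choose u : ℝ) * key

section Events

variable {Ω : Type*} {B : ℕ → Ω → Bool} {U : Finset ℕ} {k : ℕ}

lemma setOf_upTimes_eq (hU : U ⊆ range k) :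
    {ω | upTimes (B · ω) k = U} = ⋂ i ∈ range k, B i ⁻¹' {decide (i ∈ U)} := by
  ext ω
  simp [upTimes_eq_iff hU]

lemma setOf_pred_upTimes (Q : Finset ℕ → Prop) [DecidablePred Q] :
    {ω | Q (upTimes (B · ω) k)} =
      ⋃ U ∈ (range k).powerset.filter Q, {ω | upTimes (B · ω) k = U} := by
  ext ω
  simp [upTimes_subset]

lemma setOf_firstHit (w : ℤ) (i : ℕ) :
    {ω | FirstHit w (B · ω) i} =
      {ω | FirstHit w (fun l => decide (l ∈ upTimes (B · ω) i)) i} :=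
  Set.ext fun _ => firstHit_iff_upTimes

lemma setOf_exists_ge_nonneg_walk (n : ℕ) :
    {ω | ∃ m, n ≤ m ∧ 0 ≤ walk (B · ω) m} = ⋃ U ∈ (range n).powerset,
      {ω | upTimes (B · ω) n = U} ∩
        {ω | ∃ j, (n : ℤ) - 2 * #U ≤ walk (fun i => B (n + i) ω) j} := by
  ext ω
  simp only [Set.mem_ofPred_eq, Set.mem_iUnion, Set.mem_inter_iff, mem_powerset, exists_prop]
  constructor
  · rintro ⟨m, hnm, hm⟩
    obtain ⟨j, rfl⟩ := Nat.exists_eq_add_of_le hnm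
    refine ⟨_, upTimes_subset, rfl, j, ?_⟩
    rw [walk_add, walk_eq_two_mul_card_upTimes_sub] at hm
    linarith
  · rintro ⟨U, -, rfl, j, hj⟩
    refine ⟨n + j, Nat.le_add_right n j, ?_⟩
    rw [walk_add, walk_eq_two_mul_card_upTimes_sub]
    linarith

end Events

variable {Ω : Type*} [MeasurableSpace Ω]

structure IsBernoulliSeq (μ : Measure Ω) (p : ℝ) (B : ℕ → Ω → Bool) : Prop where
  measurable : ∀ i, Measurable (B i)
  iIndepFun : iIndepFun B μ
  measure_eq_true : ∀ i, μ {ω | B i ω = true} = ENNReal.ofReal p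

namespace IsBernoulliSeq

variable {μ : Measure Ω} {p : ℝ} {B : ℕ → Ω → Bool} {U : Finset ℕ} {k : ℕ}

lemma shift (hB : IsBernoulliSeq μ p B) (k : ℕ) : IsBernoulliSeq μ p fun i => B (k + i) where
  measurable i := hB.measurable (k + i)
  iIndepFun := hB.iIndepFun.precomp (add_right_injective k)
  measure_eq_true i := hB.measure_eq_true (k + i)

lemma measurableSet_upTimes_eq (hB : IsBernoulliSeq μ p B) (hU : U ⊆ range k) :
    MeasurableSet {ω | upTimes (B · ω) k = U} := by
  rw [setOf_upTimes_eq hU]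
  exact Finset.measurableSet_biInter _ fun i _ => hB.measurable i (measurableSet_singleton _)

lemma measurableSet_pred_upTimes (hB : IsBernoulliSeq μ p B) (Q : Finset ℕ → Prop)
    [DecidablePred Q] :
    MeasurableSet {ω | Q (upTimes (B · ω) k)} := by
  rw [setOf_pred_upTimes]
  exact Finset.measurableSet_biUnion _ fun U hU =>
    hB.measurableSet_upTimes_eq (mem_powerset.1 (mem_filter.1 hU).1)

lemma measure_upTimes_eq_inter_tail (hB : IsBernoulliSeq μ p B) (hU : U ⊆ range k)
    {A : Set (ℕ → Bool)} (hA : MeasurableSet A) :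
    μ ({ω | upTimes (B · ω) k = U} ∩ {ω | (fun i => B (k + i) ω) ∈ A}) =
      μ {ω | upTimes (B · ω) k = U} * μ {ω | (fun i => B (k + i) ω) ∈ A} := by
  let m : ℕ → MeasurableSpace Ω := fun i => MeasurableSpace.comap (B i) inferInstance
  have hind : Indep (⨆ i ∈ Set.Iio k, m i) (⨆ i ∈ Set.Ici k, m i) μ :=
    indep_iSup_of_disjoint (fun i => (hB.measurable i).comap_le) hB.iIndepFun
      (Set.Iio_disjoint_Ici le_rfl)
  refine (Indep_iff _ _ μ).1 hind _ _ ?_ ?_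
  · rw [setOf_upTimes_eq hU]
    refine Finset.measurableSet_biInter _ fun i hi => ?_
    exact le_iSup₂ (f := fun i (_ : i ∈ Set.Iio k) => m i) i (mem_range.1 hi) _
      ⟨{decide (i ∈ U)}, measurableSet_singleton _, rfl⟩
  · have hT : Measurable[⨆ i ∈ Set.Ici k, m i] fun ω i => B (k + i) ω :=
      @measurable_pi_lambda _ _ _ (⨆ i ∈ Set.Ici k, m i) _ _ fun i =>
        measurable_iff_comap_le.2 <|
          le_iSup₂ (f := fun i (_ : i ∈ Set.Ici k) => m i) (k + i) (Nat.le_add_right k i)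
    exact hT hA

lemma measure_exists_le_walk_eq_tsum (hB : IsBernoulliSeq μ p B) (w : ℤ) :
    μ {ω | ∃ j, w ≤ walk (B · ω) j} = ∑' i, μ {ω | FirstHit w (B · ω) i} := by
  have : {ω | ∃ j, w ≤ walk (B · ω) j} = ⋃ i, {ω | FirstHit w (B · ω) i} := by
    ext ω
    simp [exists_le_walk_iff_exists_firstHit]
  rw [this, measure_iUnion (fun i i' hne => Set.disjoint_left.2 fun ω h h' => hne (h.unique h'))
    fun i => setOf_firstHit w i ▸
      hB.measurableSet_pred_upTimes fun U => FirstHit w (fun l => decide (l ∈ U)) i]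

variable [IsProbabilityMeasure μ]

lemma le_one (hB : IsBernoulliSeq μ p B) : p ≤ 1 :=
  ENNReal.ofReal_le_one.1 (hB.measure_eq_true 0 ▸ prob_le_one)

lemma measure_eq_false (hB : IsBernoulliSeq μ p B) (hp : 0 ≤ p) (i : ℕ) :
    μ {ω | B i ω = false} = ENNReal.ofReal (1 - p) := by
  have hm : MeasurableSet {ω | B i ω = true} := hB.measurable i (measurableSet_singleton true)
  rw [show {ω | B i ω = false} = {ω | B i ω = true}ᶜ by ext; simp, prob_compl_eq_one_sub hm,
    hB.measure_eq_true, ENNReal.ofReal_sub _ hp, ENNReal.ofReal_one]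

lemma measure_preimage_singleton (hB : IsBernoulliSeq μ p B) (hp : 0 ≤ p) (i : ℕ) (b : Bool) :
    μ (B i ⁻¹' {b}) = ENNReal.ofReal (if b then p else 1 - p) := by
  cases b
  · exact hB.measure_eq_false hp i
  · exact hB.measure_eq_true i

lemma not (hB : IsBernoulliSeq μ p B) (hp : 0 ≤ p) :
    IsBernoulliSeq μ (1 - p) fun i ω => !B i ω where
  measurable i := (Measurable.of_discrete (f := fun b : Bool => !b)).comp (hB.measurable i)
  iIndepFun := hB.iIndepFun.comp (fun _ b => !b) fun _ => Measurable.of_discrete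
  measure_eq_true i := by simpa using hB.measure_eq_false hp i

lemma measure_upTimes_eq (hB : IsBernoulliSeq μ p B) (hp : 0 ≤ p) (hU : U ⊆ range k) :
    μ {ω | upTimes (B · ω) k = U} = ENNReal.ofReal (p ^ #U * (1 - p) ^ (k - #U)) := by
  rw [setOf_upTimes_eq hU, hB.iIndepFun.measure_inter_preimage_eq_mul _
    fun _ _ => measurableSet_singleton _]
  simp_rw [hB.measure_preimage_singleton hp, decide_eq_true_eq]
  rw [← ENNReal.ofReal_prod_of_nonneg fun i _ => by
    split_ifs <;> linarith [hB.le_one], prod_ite, prod_const,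
    prod_const, filter_mem_eq_inter, inter_eq_right.2 hU, filter_not, filter_mem_eq_inter,
    inter_eq_right.2 hU, card_sdiff_of_subset hU, card_range]

lemma measure_pred_upTimes (hB : IsBernoulliSeq μ p B) (hp : 0 ≤ p) (Q : Finset ℕ → Prop)
    [DecidablePred Q] :
    μ {ω | Q (upTimes (B · ω) k)} =
      ∑ U ∈ (range k).powerset.filter Q, ENNReal.ofReal (p ^ #U * (1 - p) ^ (k - #U)) := by
  rw [setOf_pred_upTimes, measure_biUnion_finset]
  · exact sum_congr rfl fun U hU =>
      hB.measure_upTimes_eq hp (mem_powerset.1 (mem_filter.1 hU).1)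
  · exact fun U _ V _ hUV => Set.disjoint_left.2 fun ω hU hV => hUV (hU.symm.trans hV)
  · exact fun U hU => hB.measurableSet_upTimes_eq (mem_powerset.1 (mem_filter.1 hU).1)

lemma identDistrib (hB : IsBernoulliSeq μ p B) (hp : 0 ≤ p) (i j : ℕ) :
    IdentDistrib (B i) (B j) μ μ where
  aemeasurable_fst := (hB.measurable i).aemeasurable
  aemeasurable_snd := (hB.measurable j).aemeasurable
  map_eq := Measure.ext_iff_singleton.2 fun b => by
    rw [Measure.map_apply (hB.measurable i) (measurableSet_singleton b),
      Measure.map_apply (hB.measurable j) (measurableSet_singleton b),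
      hB.measure_preimage_singleton hp, hB.measure_preimage_singleton hp]

lemma integral_stepOf (hB : IsBernoulliSeq μ p B) (hp : 0 ≤ p) (i : ℕ) :
    ∫ ω, (stepOf (B i ω) : ℝ) ∂μ = 2 * p - 1 := by
  rw [← integral_map (f := fun b => (stepOf b : ℝ)) (hB.measurable i).aemeasurable
      Measurable.of_discrete.aestronglyMeasurable, integral_fintype (Integrable.of_finite),
    Fintype.sum_bool]
  simp only [measureReal_def, Measure.map_apply (hB.measurable i) (measurableSet_singleton _),
    hB.measure_preimage_singleton hp, if_true, Bool.false_eq_true, if_false, stepOf,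
    ENNReal.toReal_ofReal hp, ENNReal.toReal_ofReal (sub_nonneg.2 hB.le_one)]
  push_cast
  ring

lemma ae_tendsto_walk_div (hB : IsBernoulliSeq μ p B) (hp : 0 ≤ p) :
    ∀ᵐ ω ∂μ,
      Tendsto (fun j : ℕ => (j : ℝ)⁻¹ * walk (B · ω) j) atTop (𝓝 (2 * p - 1)) := by
  let Y : ℕ → Ω → ℝ := fun i ω => stepOf (B i ω)
  have hY : ∀ i, Measurable (Y i) := fun i =>
    (Measurable.of_discrete (f := fun b : Bool => (stepOf b : ℝ))).comp (hB.measurable i)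
  have hslln := strong_law_ae Y
    (Integrable.of_bound (hY 0).aestronglyMeasurable 1 (ae_of_all _ fun ω => by
      cases h : B 0 ω <;> simp [Y, stepOf, h]))
    (fun i j hij => (hB.iIndepFun.indepFun hij).comp (φ := fun b => (stepOf b : ℝ))
      (ψ := fun b => (stepOf b : ℝ)) Measurable.of_discrete Measurable.of_discrete)
    fun i => (hB.identDistrib hp i 0).comp (u := fun b => (stepOf b : ℝ)) Measurable.of_discrete
  filter_upwards [hslln] with ω hω
  rw [hB.integral_stepOf hp 0] at hω
  simpa [Y, walk] using hω

lemma ae_tendsto_walk_atBot (hB : IsBernoulliSeq μ p B) (hp0 : 0 ≤ p) (hp : p < 1 / 2) :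
    ∀ᵐ ω ∂μ, Tendsto (fun j => walk (B · ω) j) atTop atBot := by
  filter_upwards [hB.ae_tendsto_walk_div hp0] with ω hω
  rw [← tendsto_intCast_atBot_iff (R := ℝ)]
  refine (tendsto_natCast_atTop_atTop.atTop_mul_neg (by linarith) hω).congr' ?_
  filter_upwards [eventually_ne_atTop 0] with j hj
  field_simp

lemma measure_exists_le_walk_not (hB : IsBernoulliSeq μ p B) (hp0 : 0 ≤ p) (hp : p < 1 / 2)
    (w : ℤ) : μ {ω | ∃ j, w ≤ walk (fun i => !B i ω) j} = 1 := by
  have : ∀ᵐ ω ∂μ, ∃ j, w ≤ walk (fun i => !B i ω) j := by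
    filter_upwards [hB.ae_tendsto_walk_atBot hp0 hp] with ω hω
    obtain ⟨j, hj⟩ := (hω.eventually_le_atBot (-w)).exists
    exact ⟨j, by rw [walk_not]; omega⟩
  rw [measure_congr (eventuallyEq_univ.2 this), measure_univ]

lemma measure_firstHit (hB : IsBernoulliSeq μ p B) (hp : 0 ≤ p) (w : ℤ) (i : ℕ) :
    μ {ω | FirstHit w (B · ω) i} =
      ∑ U ∈ (range i).powerset.filter (fun U => FirstHit w (fun l => decide (l ∈ U)) i),
        ENNReal.ofReal (p ^ #U * (1 - p) ^ (i - #U)) := by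
  rw [setOf_firstHit]
  exact hB.measure_pred_upTimes hp fun U => FirstHit w (fun l => decide (l ∈ U)) i

lemma measure_firstHit_eq_mul_not (hB : IsBernoulliSeq μ p B) (hp0 : 0 ≤ p) (hp1 : p < 1)
    (w : ℕ) (i : ℕ) :
    μ {ω | FirstHit w (B · ω) i} =
      ENNReal.ofReal ((p / (1 - p)) ^ w) * μ {ω | FirstHit w (fun l => !B l ω) i} := by
  rw [hB.measure_firstHit hp0, (hB.not hp0).measure_firstHit (by linarith), mul_sum]
  refine sum_congr rfl fun U hU => ?_
  obtain ⟨hUi, hhit⟩ := mem_filter.1 hU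
  have hwalk := hhit.walk_eq (Nat.cast_nonneg w)
  rw [walk_decide_mem (mem_powerset.1 hUi)] at hwalk
  have hcard : #U ≤ i := by simpa using card_le_card (mem_powerset.1 hUi)
  rw [sub_sub_cancel, ← ENNReal.ofReal_mul (pow_nonneg (div_nonneg hp0 (by linarith)) _),
    pow_mul_one_sub_pow_eq (w := w) hp1.ne hcard (by omega)]

lemma measure_exists_le_walk (hB : IsBernoulliSeq μ p B) (hp0 : 0 ≤ p) (hp : p < 1 / 2)
    (w : ℕ) :
    μ {ω | ∃ j, (w : ℤ) ≤ walk (B · ω) j} = ENNReal.ofReal ((p / (1 - p)) ^ w) := by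
  calc μ {ω | ∃ j, (w : ℤ) ≤ walk (B · ω) j}
      = ∑' i, ENNReal.ofReal ((p / (1 - p)) ^ w) * μ {ω | FirstHit w (fun l => !B l ω) i} := by
        rw [hB.measure_exists_le_walk_eq_tsum]
        exact tsum_congr fun i => hB.measure_firstHit_eq_mul_not hp0 (by linarith) w i
    _ = ENNReal.ofReal ((p / (1 - p)) ^ w) *
          μ {ω | ∃ j, (w : ℤ) ≤ walk (fun l => !B l ω) j} := by
        rw [ENNReal.tsum_mul_left, (hB.not hp0).measure_exists_le_walk_eq_tsum]
    _ = ENNReal.ofReal ((p / (1 - p)) ^ w) := by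
        rw [hB.measure_exists_le_walk_not hp0 hp, mul_one]

lemma measure_exists_le_walk_int (hB : IsBernoulliSeq μ p B) (hp0 : 0 ≤ p) (hp : p < 1 / 2)
    (w : ℤ) :
    μ {ω | ∃ j, w ≤ walk (B · ω) j} = ENNReal.ofReal ((p / (1 - p)) ^ w.toNat) := by
  obtain ⟨w, rfl | rfl⟩ := w.eq_nat_or_neg
  · simpa using hB.measure_exists_le_walk hp0 hp w
  · rw [Int.toNat_neg_natCast, pow_zero, ENNReal.ofReal_one, ← measure_univ (μ := μ)]
    congr 1
    exact Set.eq_univ_of_forall fun ω => ⟨0, by simp⟩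

theorem measure_exists_ge_nonneg_walk (hB : IsBernoulliSeq μ p B) (hp0 : 0 ≤ p)
    (hp : p < 1 / 2) (n : ℕ) :
    μ {ω | ∃ m, n ≤ m ∧ 0 ≤ walk (B · ω) m} =
      ENNReal.ofReal (∑ u ∈ range (n + 1), n.choose u *
        (p ^ u * (1 - p) ^ (n - u) * (p / (1 - p)) ^ ((n : ℤ) - 2 * u).toNat)) := by
  have hq : 0 ≤ 1 - p := sub_nonneg.2 hB.le_one
  rw [setOf_exists_ge_nonneg_walk, measure_biUnion_finset ?disj ?meas]
  case disj =>
    exact fun U _ V _ hUV => Set.disjoint_left.2 fun ω hU hV => hUV (hU.1.symm.trans hV.1)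
  case meas =>
    exact fun U hU => (hB.measurableSet_upTimes_eq (mem_powerset.1 hU)).inter
      (measurable_pi_lambda _ (fun i => hB.measurable (n + i)) (measurableSet_exists_le_walk _))
  calc ∑ U ∈ (range n).powerset,
        μ ({ω | upTimes (B · ω) n = U} ∩
          {ω | ∃ j, (n : ℤ) - 2 * #U ≤ walk (fun i => B (n + i) ω) j})
      = ∑ U ∈ (range n).powerset, ENNReal.ofReal
          (p ^ #U * (1 - p) ^ (n - #U) * (p / (1 - p)) ^ ((n : ℤ) - 2 * #U).toNat) :=
        sum_congr rfl fun U hU => by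
          have hsplit := hB.measure_upTimes_eq_inter_tail (mem_powerset.1 hU)
            (measurableSet_exists_le_walk ((n : ℤ) - 2 * #U))
          simp only [Set.mem_ofPred_eq] at hsplit
          rw [hsplit, hB.measure_upTimes_eq hp0 (mem_powerset.1 hU),
            (hB.shift n).measure_exists_le_walk_int hp0 hp, 
            ← ENNReal.ofReal_mul (by positivity)]
    _ = _ := by
      rw [← ENNReal.ofReal_sum_of_nonneg fun U _ => by positivity,
        sum_powerset_apply_card
          (fun u => p ^ u * (1 - p) ^ (n - u) * (p / (1 - p)) ^ ((n : ℤ) - 2 * u).toNat),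
        card_range]
      simp only [nsmul_eq_mul]

end IsBernoulliSeq

section IntegerSteps

variable {μ : Measure Ω} {α : ℝ} {X : ℕ → Ω → ℤ}

lemma isBernoulliSeq_decide_eq_one (hmeas : ∀ i, Measurable (X i)) (hindep : iIndepFun X μ)
    (hup : ∀ i, μ {ω | X i ω = 1} = ENNReal.ofReal α) :
    IsBernoulliSeq μ α fun i ω => decide (X i ω = 1) where
  measurable i := (Measurable.of_discrete (f := fun z : ℤ => decide (z = 1))).comp (hmeas i)
  iIndepFun := hindep.comp (fun _ z => decide (z = 1)) fun _ => Measurable.of_discrete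
  measure_eq_true i := by simpa using hup i

variable [IsProbabilityMeasure μ]

lemma ae_eq_stepOf_decide_eq_one (hmeas : ∀ i, Measurable (X i))
    (hup : ∀ i, μ {ω | X i ω = 1} = ENNReal.ofReal α)
    (hdown : ∀ i, μ {ω | X i ω = -1} = ENNReal.ofReal (1 - α)) (hα0 : 0 ≤ α)
    (hα1 : α ≤ 1) :
    ∀ᵐ ω ∂μ, ∀ i, X i ω = stepOf (decide (X i ω = 1)) := by
  refine ae_all_iff.2 fun i => ?_
  have hup_meas : MeasurableSet {ω | X i ω = 1} := hmeas i (measurableSet_singleton _)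
  have hdown_meas : MeasurableSet {ω | X i ω = -1} := hmeas i (measurableSet_singleton _)
  have hsign : ∀ᵐ ω ∂μ, ω ∈ {ω | X i ω = 1} ∪ {ω | X i ω = -1} := by
    refine (prob_compl_eq_zero_iff (hup_meas.union hdown_meas)).2 ?_
    rw [measure_union (Set.disjoint_left.2 fun ω h h' => by simp_all) hdown_meas, hup, hdown,
      ← ENNReal.ofReal_add hα0 (by linarith), add_sub_cancel, ENNReal.ofReal_one]
  filter_upwards [hsign] with ω hω
  rcases hω with h | h <;> simp_all [stepOf]

end IntegerSteps

end BernoulliWalk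

open BernoulliWalk

theorem ssle_private_game_win_probability
    {Ω : Type*} [MeasureSpace Ω] [IsProbabilityMeasure (ℙ : Measure Ω)]
    (α : ℝ) (hα0 : 0 < α) (hα : α < 1/2)
    (step : ℕ → Ω → ℤ)
    (hmeas : ∀ i, Measurable (step i))
    (hindep : iIndepFun step ℙ)
    (hup : ∀ i, ℙ {ω | step i ω = 1} = ENNReal.ofReal α)
    (hdown : ∀ i, ℙ {ω | step i ω = -1} = ENNReal.ofReal (1 - α))
    (G : ℕ → Ω → ℤ) (hG0 : ∀ ω, G 0 ω = 0)
    (hG : ∀ m ω, G (m+1) ω = G m ω + step m ω)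
    (n : ℕ) :
    ℙ {ω | ∃ m, n ≤ m ∧ 0 ≤ G m ω} =
      ENNReal.ofReal (
        (∑ v ∈ Finset.range (n + 1),
          if Even (n + v) then
            (n.choose ((n + v) / 2)) * α ^ ((n + v) / 2)
              * (1 - α) ^ (n - (n + v) / 2)
          else 0) +
        (∑ v ∈ Finset.Icc 1 n,
          if Even (n - v) then
            (n.choose ((n - v) / 2)) * (1 - α) ^ ((n - v) / 2)
              * α ^ (n - (n - v) / 2)
          else 0)) := by
  let B i ω := decide (step i ω = 1)
  have hB : IsBernoulliSeq ℙ α B := isBernoulliSeq_decide_eq_one hmeas hindep hup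
  have hGwalk : ∀ᵐ ω, ∀ m, G m ω = walk (B · ω) m := by
    filter_upwards [ae_eq_stepOf_decide_eq_one hmeas hup hdown hα0.le (by linarith)] with ω hω m
    induction m with
    | zero => simp [hG0]
    | succ m ih => rw [hG, ih, walk_succ, ← hω]
  have hevent : {ω | ∃ m, n ≤ m ∧ 0 ≤ G m ω} =ᵐ[ℙ]
      {ω | ∃ m, n ≤ m ∧ 0 ≤ walk (B · ω) m} := by
    filter_upwards [hGwalk] with ω hω
    change (∃ m, _) = (∃ m, _)
    simp only [hω]
  rw [measure_congr hevent, hB.measure_exists_ge_nonneg_walk hα0.le hα n,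
    sum_choose_mul_pow_toNat_eq_sum_even (by linarith)]
end

section
/- Define ζ(a) = (−a / (α(a+1)))^a · 1/(a+1) for −1 < a < 0 and a fixed α ∈ (0,1). Then ζ is strictly increasing on (−1, −α/(α+1)) and strictly decreasing on (−α/(α+1), 0); moreover lim_{a→0⁻} ζ(a) = 1 and lim_{a→−1⁺} ζ(a) = α, so the equation ζ(a) = 1 has a unique solution γ in (−1, 0). -/
/-!
Taking logarithms, `ζ = exp ∘ logZeta α` on `(-1, 0)`; written through `negMulLog x = -x log x`,
`logZeta α` is continuous on all of `ℝ` with values `log α` at `-1` and `0` at `0`, which gives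
both limits. Its derivative `log (-a) - log (α (a + 1))` changes sign exactly at `-α / (α + 1)`.
A continuous unimodal function whose left end value `α` lies below its right end value `1` takes
the value `1` exactly once inside, on its increasing branch.
-/

open Real Filter Topology Set

theorem existsUnique_mem_Ioo_eq_right_of_unimodal {f : ℝ → ℝ} {l m r : ℝ} (hlm : l < m)
    (hmr : m < r) (hf : ContinuousOn f (Icc l m)) (hmono : StrictMonoOn f (Icc l m))
    (hanti : StrictAntiOn f (Icc m r)) (hlr : f l < f r) :
    ∃! x, x ∈ Ioo l r ∧ f x = f r := by
  have hr : r ∈ Icc m r := right_mem_Icc.2 hmr.le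
  have h_gt : ∀ x ∈ Ico m r, f r < f x := fun x hx => hanti (Ico_subset_Icc_self hx) hr hx.2
  obtain ⟨x, hx, hfx⟩ :=
    intermediate_value_Ioo hlm.le hf ⟨hlr, h_gt m (left_mem_Ico.2 hmr)⟩
  have h_root_lt : ∀ y ∈ Ioo l r, f y = f r → y < m := fun y hy hfy =>
    not_le.1 fun hmy => (h_gt y ⟨hmy, hy.2⟩).ne' hfy
  refine ⟨x, ⟨⟨hx.1, hx.2.trans hmr⟩, hfx⟩, fun y ⟨hy, hfy⟩ => ?_⟩
  exact hmono.injOn ⟨hy.1.le, (h_root_lt y hy hfy).le⟩ (Ioo_subset_Icc_self hx)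
    (hfy.trans hfx.symm)

noncomputable def logZeta (α a : ℝ) : ℝ :=
  negMulLog (-a) + negMulLog (a + 1) - a * log α

namespace logZeta

variable {α a : ℝ}

theorem critical_mem_Ioo (hα : 0 < α) : -α / (α + 1) ∈ Ioo (-1) 0 :=
  ⟨by rw [lt_div_iff₀ (by linarith)]; linarith,
    div_neg_of_neg_of_pos (neg_neg_of_pos hα) (by linarith)⟩

theorem continuous (α : ℝ) : Continuous (logZeta α) := by
  unfold logZeta; fun_prop

@[simp] theorem apply_zero : logZeta α 0 = 0 := by simp [logZeta]

@[simp] theorem apply_neg_one : logZeta α (-1) = log α := by simp [logZeta]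

theorem exp_eq (hα : 0 < α) (ha : a ∈ Ioo (-1) 0) :
    exp (logZeta α a) = ((-a) / (α * (a + 1))) ^ a * (1 / (a + 1)) := by
  have hna : 0 < -a := neg_pos.2 ha.2
  have ha1 : 0 < a + 1 := by linarith [ha.1]
  have h_inv : 1 / (a + 1) = exp (-log (a + 1)) := by rw [exp_neg, exp_log ha1, one_div]
  rw [rpow_def_of_pos (div_pos hna (mul_pos hα ha1)), log_div hna.ne' (mul_pos hα ha1).ne',
    log_mul hα.ne' ha1.ne', h_inv, ← exp_add, logZeta, negMulLog, negMulLog]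
  ring_nf

theorem hasDerivAt (α : ℝ) (ha0 : a ≠ 0) (ha1 : a + 1 ≠ 0) :
    HasDerivAt (logZeta α) (log (-a) - log (a + 1) - log α) a := by
  have h := (((hasDerivAt_negMulLog (neg_ne_zero.2 ha0)).comp a (hasDerivAt_neg a)).add
    ((hasDerivAt_negMulLog ha1).comp a ((hasDerivAt_id a).add_const 1))).sub
    ((hasDerivAt_id a).mul_const (log α))
  exact h.congr_deriv (by ring)

theorem deriv_eq (hα : 0 < α) (ha : a ∈ Ioo (-1) 0) :
    deriv (logZeta α) a = log (-a) - log (α * (a + 1)) := by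
  have ha1 : a + 1 ≠ 0 := by linarith [ha.1]
  rw [(hasDerivAt α ha.2.ne ha1).deriv, log_mul hα.ne' ha1]
  ring

theorem strictMonoOn (hα : 0 < α) : StrictMonoOn (logZeta α) (Icc (-1) (-α / (α + 1))) := by
  refine strictMonoOn_of_deriv_pos (convex_Icc _ _) (continuous α).continuousOn fun x hx => ?_
  rw [interior_Icc] at hx
  have hlt : α * (x + 1) < -x := by
    have := (lt_div_iff₀ (by linarith : (0 : ℝ) < α + 1)).1 hx.2
    linarith
  rw [deriv_eq hα ⟨hx.1, hx.2.trans (critical_mem_Ioo hα).2⟩, sub_pos]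
  exact log_lt_log (mul_pos hα (by linarith [hx.1])) hlt

theorem strictAntiOn (hα : 0 < α) : StrictAntiOn (logZeta α) (Icc (-α / (α + 1)) 0) := by
  refine strictAntiOn_of_deriv_neg (convex_Icc _ _) (continuous α).continuousOn fun x hx => ?_
  rw [interior_Icc] at hx
  have hlt : -x < α * (x + 1) := by
    have := (div_lt_iff₀ (by linarith : (0 : ℝ) < α + 1)).1 hx.1
    linarith
  rw [deriv_eq hα ⟨(critical_mem_Ioo hα).1.trans hx.1, hx.2⟩, sub_neg]
  exact log_lt_log (neg_pos.2 hx.2) hlt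

end logZeta

theorem zeta_shape (α : ℝ) (hα : α ∈ Set.Ioo (0:ℝ) 1)
    (ζ : ℝ → ℝ)
    (hζ : ∀ a ∈ Set.Ioo (-1:ℝ) 0, ζ a = ((-a) / (α * (a + 1))) ^ a * (1 / (a + 1))) :
    StrictMonoOn ζ (Set.Ioo (-1:ℝ) (-α / (α + 1))) ∧
    StrictAntiOn ζ (Set.Ioo (-α / (α + 1)) 0) ∧
    Tendsto ζ (nhdsWithin 0 (Set.Iio (0:ℝ))) (nhds 1) ∧
    Tendsto ζ (nhdsWithin (-1) (Set.Ioi (-1:ℝ))) (nhds α) ∧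
    (∃! a : ℝ, a ∈ Set.Ioo (-1:ℝ) 0 ∧ ζ a = 1) := by
  obtain ⟨hα0, hα1⟩ := hα
  set g : ℝ → ℝ := exp ∘ logZeta α
  have hg : Continuous g := continuous_exp.comp (logZeta.continuous α)
  have hgζ : EqOn g ζ (Ioo (-1) 0) := fun a ha => (logZeta.exp_eq hα0 ha).trans (hζ a ha).symm
  obtain ⟨hm1, hm0⟩ := logZeta.critical_mem_Ioo hα0
  have hmono := exp_strictMono.comp_strictMonoOn (logZeta.strictMonoOn hα0)
  have hanti := exp_strictMono.comp_strictAntiOn (logZeta.strictAntiOn hα0)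
  have hg0 : g 0 = 1 := by simp [g]
  have hg1 : g (-1) = α := by simp [g, exp_log hα0]
  refine ⟨(hmono.mono Ioo_subset_Icc_self).congr (hgζ.mono (Ioo_subset_Ioo_right hm0.le)),
    (hanti.mono Ioo_subset_Icc_self).congr (hgζ.mono (Ioo_subset_Ioo_left hm1.le)), ?_, ?_, ?_⟩
  · rw [← hg0]
    exact ((hg.tendsto 0).mono_left nhdsWithin_le_nhds).congr'
      (eventually_of_mem (Ioo_mem_nhdsLT (by norm_num)) hgζ)
  · rw [← hg1]
    exact ((hg.tendsto (-1)).mono_left nhdsWithin_le_nhds).congr'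
      (eventually_of_mem (Ioo_mem_nhdsGT (by norm_num)) hgζ)
  · have h := existsUnique_mem_Ioo_eq_right_of_unimodal hm1 hm0 hg.continuousOn hmono hanti
      (by rw [hg0, hg1]; exact hα1)
    rw [hg0] at h
    exact (existsUnique_congr fun a => and_congr_right fun ha => by rw [hgζ ha]).1 h
end

section
/- There is a unique α ∈ (0,1) satisfying ((1−α)/α²)^{α−1} = α, and it satisfies 0.35 < α < 0.37 (numerically α ≈ 0.360). -/
/-!
Taking logarithms, for `α ∈ (0,1)` the equation `((1-α)/α²)^(α-1) = α` reads `g α = 0` with `g = thresholdGap`,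
`g α = (α-1) log(1-α) - (2α-1) log α`. On `[1/2, 1)` both terms make `g` positive, and on
`(0, 1/2)` the derivative `g' α = log((1-α)/α²) + 1/α - 1` is positive because `α² < 1-α`.
So `g` has exactly one zero in `(0,1)`, and `g 0.35 < 0 < g 0.37` locates it; these two
signs are comparisons of explicit rational powers.
-/

open Real Set

noncomputable def thresholdGap (x : ℝ) : ℝ :=
  (x - 1) * log (1 - x) - (2 * x - 1) * log x

lemma rpow_eq_self_iff_thresholdGap_eq_zero {x : ℝ} (hx : x ∈ Ioo (0 : ℝ) 1) :
    ((1 - x) / x ^ 2) ^ (x - 1) = x ↔ thresholdGap x = 0 := by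
  obtain ⟨hx0, hx1⟩ := hx
  have hlog : log ((1 - x) / x ^ 2) = log (1 - x) - 2 * log x := by
    rw [log_div (by linarith) (by positivity), log_pow, Nat.cast_ofNat]
  rw [rpow_def_of_pos (div_pos (by linarith) (by positivity)), hlog, thresholdGap,
    ← exp_log hx0, exp_eq_exp, exp_log hx0]
  constructor <;> intro h <;> linear_combination h

lemma hasDerivAt_thresholdGap {x : ℝ} (hx : x ∈ Ioo (0 : ℝ) 1) :
    HasDerivAt thresholdGap (log (1 - x) - 2 * log x + 1 / x - 1) x := by
  obtain ⟨hx0, hx1⟩ := hx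
  have hlog_one_sub : HasDerivAt (fun y => log (1 - y)) ((1 - x)⁻¹ * (-1)) x :=
    (hasDerivAt_log (by linarith)).comp x (by simpa using (hasDerivAt_id x).const_sub 1)
  have := (((hasDerivAt_id x).sub_const 1).mul hlog_one_sub).sub
    ((((hasDerivAt_id x).const_mul 2).sub_const 1).mul (hasDerivAt_log hx0.ne'))
  refine this.congr_deriv ?_
  simp only [id_eq]
  field_simp [show (1 : ℝ) - x ≠ 0 by linarith]
  ring

lemma continuousOn_thresholdGap : ContinuousOn thresholdGap (Ioo (0 : ℝ) 1) := fun _ hx =>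
  (hasDerivAt_thresholdGap hx).continuousAt.continuousWithinAt

lemma strictMonoOn_thresholdGap : StrictMonoOn thresholdGap (Ioo (0 : ℝ) (1 / 2)) := by
  have hsub : Ioo (0 : ℝ) (1 / 2) ⊆ Ioo 0 1 := Ioo_subset_Ioo_right (by norm_num)
  refine strictMonoOn_of_deriv_pos (convex_Ioo _ _) (continuousOn_thresholdGap.mono hsub) ?_
  rw [interior_Ioo]
  intro x hx
  obtain ⟨hx0, hx2⟩ := hx
  rw [(hasDerivAt_thresholdGap (hsub ⟨hx0, hx2⟩)).deriv]
  have hsq : 2 * log x < log (1 - x) := by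
    rw [← Nat.cast_ofNat, ← log_pow]
    exact log_lt_log (by positivity) (by nlinarith)
  have hinv : 1 < 1 / x := by rw [lt_div_iff₀ hx0]; linarith
  linarith

lemma thresholdGap_pos_of_half_le {x : ℝ} (hx0 : 1 / 2 ≤ x) (hx1 : x < 1) :
    0 < thresholdGap x := by
  have h1 : 0 < (x - 1) * log (1 - x) :=
    mul_pos_of_neg_of_neg (by linarith) (log_neg (by linarith) (by linarith))
  have h2 : (2 * x - 1) * log x ≤ 0 :=
    mul_nonpos_of_nonneg_of_nonpos (by linarith) (log_neg (by linarith) hx1).le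
  rw [thresholdGap]
  linarith

lemma lt_half_of_thresholdGap_eq_zero {x : ℝ} (hx : x ∈ Ioo (0 : ℝ) 1)
    (h : thresholdGap x = 0) : x ∈ Ioo (0 : ℝ) (1 / 2) :=
  ⟨hx.1, lt_of_not_ge fun hx2 => (thresholdGap_pos_of_half_le hx2 hx.2).ne' h⟩

-- `g 0.35 < 0` amounts to `6 log 0.35 < 13 log 0.65`.
lemma thresholdGap_lower_neg : thresholdGap 0.35 < 0 := by
  have key : log ((0.35 : ℝ) ^ 6) < log ((0.65 : ℝ) ^ 13) :=
    log_lt_log (by positivity) (by norm_num)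
  rw [log_pow, log_pow] at key
  norm_num [thresholdGap] at key ⊢
  linarith

-- `0 < g 0.37` amounts to `63 log 0.63 < 26 log 0.37`.
lemma thresholdGap_upper_pos : 0 < thresholdGap 0.37 := by
  have key : log ((0.63 : ℝ) ^ 63) < log ((0.37 : ℝ) ^ 26) :=
    log_lt_log (by positivity) (by norm_num)
  rw [log_pow, log_pow] at key
  norm_num [thresholdGap] at key ⊢
  linarith

lemma exists_thresholdGap_eq_zero : ∃ x ∈ Ioo (0.35 : ℝ) 0.37, thresholdGap x = 0 :=
  intermediate_value_Ioo (by norm_num)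
    (continuousOn_thresholdGap.mono (Icc_subset_Ioo (by norm_num) (by norm_num)))
    ⟨thresholdGap_lower_neg, thresholdGap_upper_pos⟩

lemma mem_Ioo_of_thresholdGap_eq_zero {x : ℝ} (hx : x ∈ Ioo (0 : ℝ) 1)
    (h : thresholdGap x = 0) : x ∈ Ioo (0.35 : ℝ) 0.37 := by
  have hx' := lt_half_of_thresholdGap_eq_zero hx h
  have hmono := strictMonoOn_thresholdGap
  constructor
  · refine (hmono.lt_iff_lt (by norm_num) hx').mp ?_
    linarith [thresholdGap_lower_neg]
  · refine (hmono.lt_iff_lt hx' (by norm_num)).mp ?_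
    linarith [thresholdGap_upper_pos]

theorem ssle_grinding_threshold :
    (∃! α : ℝ, α ∈ Set.Ioo (0:ℝ) 1 ∧ ((1 - α) / α ^ 2) ^ (α - 1) = α) ∧
    (∀ α : ℝ, α ∈ Set.Ioo (0:ℝ) 1 → ((1 - α) / α ^ 2) ^ (α - 1) = α →
      0.35 < α ∧ α < 0.37) := by
  obtain ⟨α₀, hα₀, hroot₀⟩ := exists_thresholdGap_eq_zero
  have hα₀' : α₀ ∈ Ioo (0 : ℝ) 1 := Ioo_subset_Ioo (by norm_num) (by norm_num) hα₀
  refine ⟨⟨α₀, ⟨hα₀', (rpow_eq_self_iff_thresholdGap_eq_zero hα₀').mpr hroot₀⟩, ?_⟩,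
    fun α hα heq => mem_Ioo_of_thresholdGap_eq_zero hα
      ((rpow_eq_self_iff_thresholdGap_eq_zero hα).mp heq)⟩
  rintro β ⟨hβ, heq⟩
  have hroot := (rpow_eq_self_iff_thresholdGap_eq_zero hβ).mp heq
  exact strictMonoOn_thresholdGap.injOn (lt_half_of_thresholdGap_eq_zero hβ hroot)
    (lt_half_of_thresholdGap_eq_zero hα₀' hroot₀) (hroot.trans hroot₀.symm)
end

section
/- There is a unique α ∈ (0,1) satisfying ((1 − e^{α−1})/(α e^{α−1}))^{e^{α−1} − 1} = e^{α−1}, and it satisfies 0.26 < α < 0.27 (numerically α ≈ 0.265). -/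
/-!
Writing `b = exp (α - 1)` and taking logarithms, the equation becomes
`(1 - b) / α = exp ((1 - α) / (exp (1 - α) - 1))`. On `(0, 1)` the left side is strictly
decreasing, and the right side is increasing because `t / (exp t - 1)` decreases for `t > 0`
(the secant slopes of the convex function `exp` through `0` increase). So the difference of the
two sides has at most one zero; Taylor bounds on `exp` show that it is positive at `0.26` and
negative at `0.27`, and the intermediate value theorem supplies the zero in between.
-/

open Real Set

theorem antitoneOn_div_exp_sub_one : AntitoneOn (fun t : ℝ => t / (exp t - 1)) (Ioi 0) := by
  intro s hs t ht hst
  have hslope : (exp s - 1) / s ≤ (exp t - 1) / t := by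
    simpa [exp_zero] using convexOn_exp.secant_mono (a := 0) (mem_univ _) (mem_univ _)
      (mem_univ _) (ne_of_gt hs) (ne_of_gt ht) hst
  have hpos : 0 < (exp s - 1) / s :=
    div_pos (by linarith [add_one_lt_exp (mem_Ioi.1 hs).ne', mem_Ioi.1 hs]) hs
  simpa only [inv_div] using inv_anti₀ hpos hslope

theorem strictAntiOn_one_sub_exp_sub_one_div :
    StrictAntiOn (fun a : ℝ => (1 - exp (a - 1)) / a) (Ioo 0 1) := by
  intro a ha a' ha' haa'
  have hnum : 1 - exp (a' - 1) < 1 - exp (a - 1) := by gcongr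
  have hnum_nonneg : 0 ≤ 1 - exp (a - 1) := by
    linarith [exp_lt_one_iff.2 (show a - 1 < 0 by linarith [ha.2])]
  exact div_lt_div₀ hnum haa'.le hnum_nonneg ha.1

theorem monotoneOn_exp_div_exp_sub_one :
    MonotoneOn (fun a : ℝ => exp ((1 - a) / (exp (1 - a) - 1))) (Iio 1) := by
  intro a ha a' ha' haa'
  exact exp_le_exp.2 <| antitoneOn_div_exp_sub_one (mem_Ioi.2 (sub_pos.2 ha'))
    (mem_Ioi.2 (sub_pos.2 ha)) (by linarith)

noncomputable def grindingGap (a : ℝ) : ℝ :=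
  (1 - exp (a - 1)) / a - exp ((1 - a) / (exp (1 - a) - 1))

theorem grindingGap_strictAntiOn : StrictAntiOn grindingGap (Ioo 0 1) := fun _ ha _ ha' h => by
  have hlhs := strictAntiOn_one_sub_exp_sub_one_div ha ha' h
  have hrhs := monotoneOn_exp_div_exp_sub_one ha.2 ha'.2 h.le
  simp only [grindingGap] at hlhs hrhs ⊢
  linarith

theorem grindingGap_continuousOn : ContinuousOn grindingGap (Ioo 0 1) := by
  intro a ha
  have ha0 : a ≠ 0 := ha.1.ne'
  have hexp : exp (1 - a) - 1 ≠ 0 := by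
    linarith [one_lt_exp_iff.2 (show 0 < 1 - a by linarith [ha.2])]
  unfold grindingGap
  fun_prop (disch := assumption)

theorem rpow_eq_exp_iff_grindingGap_eq_zero {a : ℝ} (ha : a ∈ Ioo 0 1) :
    ((1 - exp (a - 1)) / (a * exp (a - 1))) ^ (exp (a - 1) - 1) = exp (a - 1) ↔
      grindingGap a = 0 := by
  obtain ⟨ha0, ha1⟩ := ha
  set b := exp (a - 1) with hb
  have hb0 : 0 < b := exp_pos _
  have hb1 : b < 1 := exp_lt_one_iff.2 (by linarith)
  have hq : 0 < (1 - b) / a := div_pos (by linarith) ha0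
  have hexp : exp (1 - a) = b⁻¹ := by rw [hb, ← exp_neg, neg_sub]
  have hrhs : (1 - a) / (b⁻¹ - 1) = (1 - a) * b / (1 - b) := by field_simp
  calc _ ↔ log ((1 - b) / a / b) * (b - 1) = a - 1 := by
        rw [rpow_def_of_pos (by positivity), div_div, hb, exp_eq_exp]
    _ ↔ log ((1 - b) / a) * (1 - b) = (1 - a) * b := by
        rw [log_div hq.ne' hb0.ne', hb, log_exp]
        constructor <;> intro h <;> linarith
    _ ↔ grindingGap a = 0 := by
        rw [grindingGap, ← hb, hexp, hrhs, sub_eq_zero, ← eq_div_iff (by linarith),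
          ← exp_eq_exp, exp_log hq]

theorem grindingGap_0_26_pos : 0 < grindingGap 0.26 := by
  have hL : 2.09 ≤ exp 0.74 := by
    have := sum_le_exp_of_nonneg (x := 0.74) (by norm_num) 5
    norm_num [Finset.sum_range_succ, Nat.factorial] at this
    linarith
  have hU : exp 0.68 ≤ 2 := by
    have := exp_bound' (x := 0.68) (by norm_num) (by norm_num) (n := 5) (by norm_num)
    norm_num [Finset.sum_range_succ, Nat.factorial] at this
    linarith
  have hs : 0.74 / (exp 0.74 - 1) ≤ 0.68 := by
    rw [div_le_iff₀ (by linarith)]; linarith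
  have hinv : (exp 0.74)⁻¹ ≤ 2.09⁻¹ := inv_anti₀ (by norm_num) hL
  rw [grindingGap, sub_pos, show (0.26 : ℝ) - 1 = -0.74 by norm_num, exp_neg,
    show (1 : ℝ) - 0.26 = 0.74 by norm_num]
  calc exp (0.74 / (exp 0.74 - 1)) ≤ exp 0.68 := exp_le_exp.2 hs
    _ ≤ 2 := hU
    _ < (1 - (exp 0.74)⁻¹) / 0.26 := by
        rw [lt_div_iff₀ (by norm_num)]; norm_num at hinv ⊢; linarith

theorem grindingGap_0_27_neg : grindingGap 0.27 < 0 := by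
  have hU : exp 0.73 ≤ 2.08 := by
    have := exp_bound' (x := 0.73) (by norm_num) (by norm_num) (n := 6) (by norm_num)
    norm_num [Finset.sum_range_succ, Nat.factorial] at this
    linarith
  have hL : 1.95 ≤ exp 0.675 := by
    have := sum_le_exp_of_nonneg (x := 0.675) (by norm_num) 5
    norm_num [Finset.sum_range_succ, Nat.factorial] at this
    linarith
  have hs : 0.675 ≤ 0.73 / (exp 0.73 - 1) := by
    rw [le_div_iff₀ (by linarith [add_one_le_exp (0.73 : ℝ)])]; linarith
  have hinv : 2.08⁻¹ ≤ (exp 0.73)⁻¹ := inv_anti₀ (exp_pos _) hU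
  rw [grindingGap, sub_neg, show (0.27 : ℝ) - 1 = -0.73 by norm_num, exp_neg,
    show (1 : ℝ) - 0.27 = 0.73 by norm_num]
  calc (1 - (exp 0.73)⁻¹) / 0.27 < 1.95 := by
        rw [div_lt_iff₀ (by norm_num)]; norm_num at hinv ⊢; linarith
    _ ≤ exp 0.675 := hL
    _ ≤ exp (0.73 / (exp 0.73 - 1)) := exp_le_exp.2 hs

theorem ple_grinding_threshold :
    (∃! α : ℝ, α ∈ Set.Ioo (0:ℝ) 1 ∧
      ((1 - Real.exp (α - 1)) / (α * Real.exp (α - 1))) ^ (Real.exp (α - 1) - 1)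
        = Real.exp (α - 1)) ∧
    (∀ α : ℝ, α ∈ Set.Ioo (0:ℝ) 1 →
      ((1 - Real.exp (α - 1)) / (α * Real.exp (α - 1))) ^ (Real.exp (α - 1) - 1)
        = Real.exp (α - 1) →
      0.26 < α ∧ α < 0.27) := by
  have hsub : Icc (0.26 : ℝ) 0.27 ⊆ Ioo 0 1 := Icc_subset_Ioo (by norm_num) (by norm_num)
  have hbounds : ∀ α ∈ Ioo (0 : ℝ) 1, grindingGap α = 0 → 0.26 < α ∧ α < 0.27 := by
    intro α hα h0
    constructor
    · refine (grindingGap_strictAntiOn.lt_iff_gt hα (hsub ⟨le_rfl, by norm_num⟩)).1 ?_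
      rw [h0]; exact grindingGap_0_26_pos
    · refine (grindingGap_strictAntiOn.lt_iff_gt (hsub ⟨by norm_num, le_rfl⟩) hα).1 ?_
      rw [h0]; exact grindingGap_0_27_neg
  obtain ⟨c, hc, hc0⟩ :=
    intermediate_value_Ioo' (by norm_num) (grindingGap_continuousOn.mono hsub)
      ⟨grindingGap_0_27_neg, grindingGap_0_26_pos⟩
  have hc' : c ∈ Ioo (0 : ℝ) 1 := hsub (Ioo_subset_Icc_self hc)
  refine ⟨⟨c, ⟨hc', (rpow_eq_exp_iff_grindingGap_eq_zero hc').2 hc0⟩, ?_⟩, ?_⟩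
  · rintro y ⟨hy, hyeq⟩
    exact grindingGap_strictAntiOn.injOn hy hc'
      (((rpow_eq_exp_iff_grindingGap_eq_zero hy).1 hyeq).trans hc0.symm)
  · exact fun α hα h => hbounds α hα ((rpow_eq_exp_iff_grindingGap_eq_zero hα).1 h)
end
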